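/- arXiv:2505.20851 — 5 statements merged into one kernel-verified Lean document; each statement's English description precedes it below -/
import Mathlib

section
/- For every real number α ≤ 1/2 there exists an infinite Sidon set S of positive integers such that ∑_{s∈S} s^{-α} = +∞. -/
open scoped ENNReal

/-- A set of positive integers is a Sidon set: all pairwise sums `s + t`
with `s ≤ t` are distinct. -/
def IsSidon (S : Set ℕ) : Prop :=
  (∀ s ∈ S, 0 < s) ∧
    ∀ a ∈ S, ∀ b ∈ S, ∀ c ∈ S, ∀ d ∈ S,
      a ≤ b → c ≤ d → a + b = c + d → a = c ∧ b = d

namespace SidonDiv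

/-- A prime at least `m + 3`. -/
noncomputable def pr (m : ℕ) : ℕ := (Nat.exists_infinite_primes (m + 3)).choose

lemma pr_prime (m : ℕ) : (pr m).Prime := (Nat.exists_infinite_primes (m + 3)).choose_spec.2

lemma pr_ge (m : ℕ) : m + 3 ≤ pr m := (Nat.exists_infinite_primes (m + 3)).choose_spec.1

/-- The Erdős–Turán function: `n ↦ 2pn + (n² mod p)`. -/
def etf (p n : ℕ) : ℕ := 2 * p * n + n ^ 2 % p

lemma etf_zero (p : ℕ) : etf p 0 = 0 := by simp [etf]

lemma etf_lt {p : ℕ} (hp : 0 < p) {n : ℕ} (hn : n < p) : etf p n < 2 * p ^ 2 := by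
  have h1 : n ^ 2 % p < p := Nat.mod_lt _ hp
  have h2 : 2 * p * n + p ≤ 2 * p ^ 2 := by nlinarith
  unfold etf; linarith

lemma etf_gap {p : ℕ} (hp : 0 < p) {m n : ℕ} (h : m < n) : etf p m + p < etf p n := by
  have h1 : m ^ 2 % p < p := Nat.mod_lt _ hp
  have h2 : 2 * p * (m + 1) ≤ 2 * p * n := by
    exact Nat.mul_le_mul_left _ h
  have h3 : 2 * p * (m + 1) = 2 * p * m + 2 * p := by ring
  have h4 : (0:ℕ) ≤ n ^ 2 % p := Nat.zero_le _
  unfold etf; linarith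

lemma split_eq {p n1 n2 n3 n4 : ℕ} (hp : 0 < p)
    (h : etf p n1 + etf p n2 = etf p n3 + etf p n4) :
    n1 + n2 = n3 + n4 ∧ n1 ^ 2 % p + n2 ^ 2 % p = n3 ^ 2 % p + n4 ^ 2 % p := by
  have h1 : n1 ^ 2 % p < p := Nat.mod_lt _ hp
  have h2 : n2 ^ 2 % p < p := Nat.mod_lt _ hp
  have h3 : n3 ^ 2 % p < p := Nat.mod_lt _ hp
  have h4 : n4 ^ 2 % p < p := Nat.mod_lt _ hp
  unfold etf at h
  have hs : n1 + n2 = n3 + n4 := by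
    rcases Nat.lt_trichotomy (n1 + n2) (n3 + n4) with hlt | he | hgt
    · exfalso
      have hm : 2 * p * (n1 + n2 + 1) ≤ 2 * p * (n3 + n4) := Nat.mul_le_mul_left _ hlt
      have e1 : 2 * p * (n1 + n2 + 1) = 2 * p * n1 + 2 * p * n2 + 2 * p := by ring
      have e2 : 2 * p * (n3 + n4) = 2 * p * n3 + 2 * p * n4 := by ring
      have g3 : 0 ≤ n3 ^ 2 % p := Nat.zero_le _
      have g4 : 0 ≤ n4 ^ 2 % p := Nat.zero_le _
      linarith
    · exact he
    · exfalso
      have hm : 2 * p * (n3 + n4 + 1) ≤ 2 * p * (n1 + n2) := Nat.mul_le_mul_left _ hgt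
      have e1 : 2 * p * (n3 + n4 + 1) = 2 * p * n3 + 2 * p * n4 + 2 * p := by ring
      have e2 : 2 * p * (n1 + n2) = 2 * p * n1 + 2 * p * n2 := by ring
      have g1 : 0 ≤ n1 ^ 2 % p := Nat.zero_le _
      have g2 : 0 ≤ n2 ^ 2 % p := Nat.zero_le _
      linarith
  refine ⟨hs, ?_⟩
  have e1 : 2 * p * n1 + 2 * p * n2 = 2 * p * n3 + 2 * p * n4 := by
    have e2 : 2 * p * n1 + 2 * p * n2 = 2 * p * (n1 + n2) := by ring
    have e3 : 2 * p * n3 + 2 * p * n4 = 2 * p * (n3 + n4) := by ring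
    rw [e2, e3, hs]
  linarith

lemma etf_sidon {p : ℕ} (hp : p.Prime) (hp3 : 3 ≤ p) {n1 n2 n3 n4 : ℕ}
    (h1 : n1 < p) (h2 : n2 < p) (h3 : n3 < p) (h4 : n4 < p)
    (heq : etf p n1 + etf p n2 = etf p n3 + etf p n4) :
    (n1 = n3 ∧ n2 = n4) ∨ (n1 = n4 ∧ n2 = n3) := by
  have hp0 : 0 < p := by omega
  obtain ⟨hs, hr⟩ := split_eq hp0 heq
  haveI : Fact p.Prime := ⟨hp⟩
  have e1 : (n1 : ZMod p) + n2 = n3 + n4 := by exact_mod_cast congrArg (Nat.cast : ℕ → ZMod p) hs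
  have e2 : (n1 : ZMod p) ^ 2 + n2 ^ 2 = n3 ^ 2 + n4 ^ 2 := by
    have := congrArg (Nat.cast : ℕ → ZMod p) hr
    push_cast [ZMod.natCast_mod] at this
    exact this
  have h2ne : (2 : ZMod p) ≠ 0 := by
    have : ¬ (p ∣ 2) := by
      intro hd
      have := Nat.le_of_dvd (by norm_num) hd
      omega
    intro hc
    exact this ((ZMod.natCast_eq_zero_iff 2 p).mp (by exact_mod_cast hc))
  have key : ((n1 : ZMod p) - n3) * ((n1 : ZMod p) - n4) = 0 := by
    have h2' : (2 : ZMod p) * (((n1 : ZMod p) - n3) * ((n1 : ZMod p) - n4)) = 0 := by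
      linear_combination e2 + ((n1 : ZMod p) - n2 - n3 - n4) * e1
    rcases mul_eq_zero.mp h2' with h | h
    · exact absurd h h2ne
    · exact h
  have cast_inj : ∀ {a b : ℕ}, a < p → b < p → (a : ZMod p) = b → a = b := by
    intro a b ha hb hab
    have := congrArg ZMod.val hab
    rwa [ZMod.val_natCast_of_lt ha, ZMod.val_natCast_of_lt hb] at this
  rcases mul_eq_zero.mp key with h | h
  · left
    have h13 : n1 = n3 := cast_inj h1 h3 (by rwa [sub_eq_zero] at h)
    exact ⟨h13, by omega⟩
  · right
    have h14 : n1 = n4 := cast_inj h1 h4 (by rwa [sub_eq_zero] at h)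
    exact ⟨h14, by omega⟩

/-- The scale sequence. -/
noncomputable def Ms : ℕ → ℕ
  | 0 => 1
  | j + 1 => 2 * Ms j + 4 * (pr (Ms j)) ^ 2

noncomputable def pj (j : ℕ) : ℕ := pr (Ms j)

noncomputable def tj (j : ℕ) : ℕ := 2 * Ms j + 2 * (pj j) ^ 2

lemma Ms_succ (j : ℕ) : Ms (j + 1) = 2 * Ms j + 4 * (pj j) ^ 2 := rfl

lemma Ms_pos (j : ℕ) : 1 ≤ Ms j := by
  induction j with
  | zero => exact le_refl 1
  | succ j ih => rw [Ms_succ]; omega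

lemma pj_ge (j : ℕ) : Ms j + 3 ≤ pj j := pr_ge _

lemma pj_prime (j : ℕ) : (pj j).Prime := pr_prime _

lemma pj_pos (j : ℕ) : 0 < pj j := by have := pj_ge j; omega

lemma Ms_lt_succ (j : ℕ) : Ms j < Ms (j + 1) := by
  rw [Ms_succ]
  have := Ms_pos j
  have := pj_pos j
  nlinarith

lemma Ms_mono : Monotone Ms := monotone_nat_of_le_succ (fun j => (Ms_lt_succ j).le)

/-- The blocks. -/
noncomputable def blk (j : ℕ) : Finset ℕ :=
  (Finset.range (pj j)).image (fun n => tj j + etf (pj j) n)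

lemma mem_blk {j x : ℕ} :
    x ∈ blk j ↔ ∃ n < pj j, x = tj j + etf (pj j) n := by
  simp [blk, eq_comm]

lemma blk_lower {j x : ℕ} (hx : x ∈ blk j) : tj j ≤ x := by
  obtain ⟨n, _, rfl⟩ := mem_blk.mp hx
  omega

lemma blk_upper {j x : ℕ} (hx : x ∈ blk j) : x < Ms (j + 1) := by
  obtain ⟨n, hn, rfl⟩ := mem_blk.mp hx
  have := etf_lt (pj_pos j) hn
  rw [Ms_succ]
  unfold tj
  omega

lemma tj_ge (j : ℕ) : 2 * Ms j ≤ tj j := by unfold tj; omega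

lemma blk_lt_of_lt {i j x : ℕ} (hij : i < j) (hx : x ∈ blk i) : x < Ms j := by
  have := blk_upper hx
  have := Ms_mono (show i + 1 ≤ j from hij)
  omega

def S : Set ℕ := ⋃ j, (blk j : Set ℕ)

lemma mem_S {x : ℕ} : x ∈ S ↔ ∃ j, x ∈ blk j := by simp [S]

lemma S_pos {x : ℕ} (hx : x ∈ S) : 2 ≤ x := by
  obtain ⟨j, hj⟩ := mem_S.mp hx
  have := blk_lower hj
  have := tj_ge j
  have := Ms_pos j
  omega

lemma sidon_S : IsSidon S := by
  constructor
  · intro s hs; have := S_pos hs; omega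
  intro a ha b hb c hc d hd hab hcd hsum
  obtain ⟨ja, hja⟩ := mem_S.mp ha
  obtain ⟨j, hjb⟩ := mem_S.mp hb
  obtain ⟨jc, hjc⟩ := mem_S.mp hc
  obtain ⟨jd, hjd⟩ := mem_S.mp hd
  -- top blocks agree
  have hbd : j = jd := by
    by_contra hne
    rcases Nat.lt_or_ge j jd with h | h
    · have h1 : b < Ms jd := blk_lt_of_lt h hjb
      have h2 : tj jd ≤ d := blk_lower hjd
      have h3 := tj_ge jd
      have h4 : 2 ≤ c := S_pos hc
      omega
    · have h' : jd < j := by omega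
      have h1 : d < Ms j := blk_lt_of_lt h' hjd
      have h2 : tj j ≤ b := blk_lower hjb
      have h3 := tj_ge j
      have h4 : 2 ≤ a := S_pos ha
      omega
  subst hbd
  have hale : ja ≤ j := by
    by_contra h
    push_neg at h
    have h1 : a < Ms ja := by
      have := blk_upper hjb
      have := Ms_mono (show j + 1 ≤ ja from h)
      omega
    have h2 : tj ja ≤ a := blk_lower hja
    have h3 := tj_ge ja
    have h4 := Ms_pos ja
    omega
  have hcle : jc ≤ j := by
    by_contra h
    push_neg at h
    have h1 : c < Ms jc := by
      have hd1 := blk_upper hjd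
      have := Ms_mono (show j + 1 ≤ jc from h)
      omega
    have h2 : tj jc ≤ c := blk_lower hjc
    have h3 := tj_ge jc
    have h4 := Ms_pos jc
    omega
  obtain ⟨nb, hnb, rfl⟩ := mem_blk.mp hjb
  obtain ⟨nd, hnd, rfl⟩ := mem_blk.mp hjd
  have hp3 : 3 ≤ pj j := by have := pj_ge j; have := Ms_pos j; omega
  rcases eq_or_lt_of_le hale with haj | haj
  · -- a in block j
    rcases eq_or_lt_of_le hcle with hcj | hcj
    · -- all four in block j
      rw [haj] at hja
      rw [hcj] at hjc
      obtain ⟨na, hna, rfl⟩ := mem_blk.mp hja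
      obtain ⟨nc, hnc, rfl⟩ := mem_blk.mp hjc
      have heq : etf (pj j) na + etf (pj j) nb = etf (pj j) nc + etf (pj j) nd := by omega
      rcases etf_sidon (pj_prime j) hp3 hna hnb hnc hnd heq with ⟨e1, e2⟩ | ⟨e1, e2⟩
      · subst e1; subst e2; exact ⟨rfl, rfl⟩
      · subst e1; subst e2; omega
    · -- a in block j, c in lower block : impossible
      exfalso
      rw [haj] at hja
      have h1 : tj j ≤ a := blk_lower hja
      have h2 : c < Ms j := blk_lt_of_lt hcj hjc
      have h3 : etf (pj j) nd < 2 * (pj j) ^ 2 := etf_lt (pj_pos j) hnd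
      have h4 := Ms_pos j
      unfold tj at *
      omega
  · rcases eq_or_lt_of_le hcle with hcj | hcj
    · -- c in block j, a in lower block : impossible
      exfalso
      rw [hcj] at hjc
      have h1 : tj j ≤ c := blk_lower hjc
      have h2 : a < Ms j := blk_lt_of_lt haj hja
      have h3 : etf (pj j) nb < 2 * (pj j) ^ 2 := etf_lt (pj_pos j) hnb
      have h4 := Ms_pos j
      unfold tj at *
      omega
    · -- a, c both in lower blocks
      have h1 : a < Ms j := blk_lt_of_lt haj hja
      have h2 : c < Ms j := blk_lt_of_lt hcj hjc
      have h4 : 2 ≤ a := S_pos ha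
      have h5 : 2 ≤ c := S_pos hc
      have hMp : Ms j + 3 ≤ pj j := pj_ge j
      have hnbd : nb = nd := by
        rcases Nat.lt_trichotomy nb nd with h | h | h
        · exfalso
          have := etf_gap (pj_pos j) h
          omega
        · exact h
        · exfalso
          have := etf_gap (pj_pos j) h
          omega
      subst hnbd
      exact ⟨by omega, rfl⟩

lemma infinite_S : S.Infinite := by
  have hmono : StrictMono (fun j : ℕ => tj j + etf (pj j) 0) := by
      apply strictMono_nat_of_lt_succ
      intro j
      simp only [etf_zero, add_zero]
      have h1 : tj j < Ms (j + 1) := by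
        rw [Ms_succ]; unfold tj
        have := pj_pos j
        nlinarith
      have h2 : Ms (j + 1) ≤ tj (j + 1) := by
        have := tj_ge (j + 1)
        have := Ms_pos (j + 1)
        omega
      omega
  exact Set.infinite_of_injective_forall_mem hmono.injective
    (fun j => mem_S.mpr ⟨j, mem_blk.mpr ⟨0, pj_pos j, rfl⟩⟩)

noncomputable def f (x : ℕ) : ℝ≥0∞ := (x : ℝ≥0∞) ^ (-(1/2) : ℝ)

lemma f_ge {x k : ℕ} (hk : 0 < k) (hx : x ≤ k ^ 2) : ((k : ℝ≥0∞))⁻¹ ≤ f x := by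
  unfold f
  rw [ENNReal.rpow_neg]
  apply ENNReal.inv_le_inv.mpr
  have h1 : (x : ℝ≥0∞) ^ ((1:ℝ)/2) ≤ ((k:ℝ≥0∞) ^ (2:ℕ)) ^ ((1:ℝ)/2) := by
    apply ENNReal.rpow_le_rpow _ (by norm_num)
    exact_mod_cast (by exact_mod_cast hx : (x : ℝ≥0∞) ≤ ((k ^ 2 : ℕ) : ℝ≥0∞))
  calc (x : ℝ≥0∞) ^ ((1:ℝ)/2) ≤ ((k:ℝ≥0∞) ^ (2:ℕ)) ^ ((1:ℝ)/2) := h1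
    _ = (k : ℝ≥0∞) := by
        rw [← ENNReal.rpow_natCast (k : ℝ≥0∞) 2, ← ENNReal.rpow_mul]
        norm_num

lemma blk_sum (j : ℕ) : (3 : ℝ≥0∞)⁻¹ ≤ ∑ x ∈ blk j, f x := by
  have hinj : Set.InjOn (fun n => tj j + etf (pj j) n) (Finset.range (pj j)) := by
    intro m _ n _ h
    simp only at h
    by_contra hne
    rcases Nat.lt_or_ge m n with hlt | hge
    · have := etf_gap (pj_pos j) hlt
      have := pj_pos j
      omega
    · have hlt : n < m := by omega
      have := etf_gap (pj_pos j) hlt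
      have := pj_pos j
      omega
  unfold blk
  rw [Finset.sum_image hinj]
  have hterm : ∀ n ∈ Finset.range (pj j),
      ((3 * pj j : ℕ) : ℝ≥0∞)⁻¹ ≤ f (tj j + etf (pj j) n) := by
    intro n hn
    apply f_ge (by have := pj_pos j; omega)
    have h1 : etf (pj j) n < 2 * (pj j) ^ 2 := etf_lt (pj_pos j) (Finset.mem_range.mp hn)
    have h2 : Ms j ≤ pj j := by have := pj_ge j; omega
    have h3 := pj_pos j
    unfold tj
    nlinarith
  calc (3 : ℝ≥0∞)⁻¹
      = (pj j : ℝ≥0∞) * ((3 * pj j : ℕ) : ℝ≥0∞)⁻¹ := by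
        have hp0 : ((pj j : ℕ) : ℝ≥0∞) ≠ 0 := by
          exact_mod_cast Nat.cast_ne_zero.mpr (pj_pos j).ne'
        push_cast
        rw [ENNReal.mul_inv (by right; exact ENNReal.natCast_ne_top _) (by left; norm_num)]
        rw [← mul_assoc, mul_comm (pj j : ℝ≥0∞) (3 : ℝ≥0∞)⁻¹, mul_assoc,
          ENNReal.mul_inv_cancel hp0 (ENNReal.natCast_ne_top _), mul_one]
    _ ≤ ∑ n ∈ Finset.range (pj j), f (tj j + etf (pj j) n) := by
        have := Finset.card_nsmul_le_sum (Finset.range (pj j))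
          (fun n => f (tj j + etf (pj j) n)) (((3 * pj j : ℕ) : ℝ≥0∞)⁻¹) hterm
        simpa [Finset.card_range, nsmul_eq_mul] using this

lemma blk_disjoint {i j : ℕ} (hij : i ≠ j) : Disjoint (blk i) (blk j) := by
  wlog h : i < j generalizing i j
  · exact (this hij.symm (by omega)).symm
  rw [Finset.disjoint_left]
  intro x hxi hxj
  have h1 : x < Ms j := blk_lt_of_lt h hxi
  have h2 : tj j ≤ x := blk_lower hxj
  have h3 := tj_ge j
  omega

lemma sum_lower (N : ℕ) : (N : ℝ≥0∞) * (3 : ℝ≥0∞)⁻¹ ≤ ∑' s : S, f s := by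
  classical
  set F : Finset ℕ := (Finset.range N).biUnion blk with hF
  have hsub : ∀ x ∈ F, x ∈ S := by
    intro x hx
    obtain ⟨j, _, hj⟩ := Finset.mem_biUnion.mp hx
    exact mem_S.mpr ⟨j, hj⟩
  have h1 : (N : ℝ≥0∞) * (3 : ℝ≥0∞)⁻¹ ≤ ∑ x ∈ F, f x := by
    rw [hF, Finset.sum_biUnion (fun i _ j _ hij => blk_disjoint hij)]
    calc (N : ℝ≥0∞) * (3 : ℝ≥0∞)⁻¹
        = ∑ _j ∈ Finset.range N, (3 : ℝ≥0∞)⁻¹ := by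
          rw [Finset.sum_const, Finset.card_range, nsmul_eq_mul]
      _ ≤ ∑ j ∈ Finset.range N, ∑ x ∈ blk j, f x :=
          Finset.sum_le_sum (fun j _ => blk_sum j)
  have h2 : ∑ x ∈ F, f x ≤ ∑' s : S, f s := by
    rw [tsum_subtype]
    have h3 : ∑ x ∈ F, f x = ∑ x ∈ F, S.indicator f x := by
      apply Finset.sum_congr rfl
      intro x hx
      rw [Set.indicator_of_mem (hsub x hx)]
    rw [h3]
    exact ENNReal.sum_le_tsum F
  exact h1.trans h2

lemma tsum_top : (∑' s : S, f s) = ⊤ := by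
  by_contra h
  obtain ⟨n, hn⟩ := ENNReal.exists_nat_gt h
  have h1 := sum_lower (3 * n)
  have h2 : ((3 * n : ℕ) : ℝ≥0∞) * (3 : ℝ≥0∞)⁻¹ = (n : ℝ≥0∞) := by
    push_cast
    rw [mul_comm (3 : ℝ≥0∞) (n : ℝ≥0∞), mul_assoc,
      ENNReal.mul_inv_cancel (by norm_num) (by norm_num), mul_one]
  rw [h2] at h1
  exact absurd (h1.trans_lt hn) (lt_irrefl _)

end SidonDiv

theorem exists_infinite_sidon_rpow_sum_eq_top (α : ℝ) (hα : α ≤ 1 / 2) :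
    ∃ S : Set ℕ, IsSidon S ∧ S.Infinite ∧
      (∑' s : S, ((s : ℕ) : ℝ≥0∞) ^ (-α)) = ⊤ := by
  refine ⟨SidonDiv.S, SidonDiv.sidon_S, SidonDiv.infinite_S, ?_⟩
  have hle : (∑' s : SidonDiv.S, SidonDiv.f s) ≤ ∑' s : SidonDiv.S, ((s : ℕ) : ℝ≥0∞) ^ (-α) := by
    apply Summable.tsum_le_tsum _ ENNReal.summable ENNReal.summable
    intro s
    unfold SidonDiv.f
    apply ENNReal.rpow_le_rpow_of_exponent_le
    · have h2 : 1 ≤ (s : ℕ) := by have := SidonDiv.S_pos s.2; omega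
      exact_mod_cast h2
    · linarith
  rw [SidonDiv.tsum_top] at hle
  exact top_le_iff.mp hle
end

section
/- For every Sidon set S of positive integers and every t ∈ (0,1), f_S(t) ≤ √(2t/(1−t)). -/
/-- The generating function `f_S(t) = ∑_{s ∈ S} t ^ s`. -/
noncomputable def genFun (S : Set ℕ) (t : ℝ) : ℝ :=
  ∑' s : S, t ^ (s : ℕ)

theorem genFun_le_sqrt (S : Set ℕ) (hS : IsSidon S) (t : ℝ) (ht : t ∈ Set.Ioo (0 : ℝ) 1) :
    genFun S t ≤ Real.sqrt (2 * t / (1 - t)) := by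
  obtain ⟨ht0, ht1⟩ := ht
  have h1t : 0 < 1 - t := by linarith
  have hgeo : Summable (fun n : ℕ => t ^ n) := summable_geometric_of_lt_one ht0.le ht1
  have hsum : Summable (fun s : S => t ^ (s : ℕ)) := hgeo.subtype S
  have hf0 : 0 ≤ genFun S t := tsum_nonneg fun s => pow_nonneg ht0.le _
  have hnorm : Summable (fun s : S => ‖t ^ (s : ℕ)‖) := by
    simpa [Real.norm_eq_abs, abs_pow, abs_of_nonneg ht0.le] using hsum
  -- the injection into `Bool × ℕ`
  set i : S × S → Bool × ℕ :=
    fun p => (decide ((p.1 : ℕ) ≤ (p.2 : ℕ)), (p.1 : ℕ) + (p.2 : ℕ) - 2) with hi_def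
  have hpos : ∀ s : S, 1 ≤ (s : ℕ) := fun s => hS.1 s s.2
  have hi : Function.Injective i := by
    intro p q h
    have h1 : (decide ((p.1 : ℕ) ≤ (p.2 : ℕ))) = decide ((q.1 : ℕ) ≤ (q.2 : ℕ)) :=
      congrArg Prod.fst h
    have h2 : (p.1 : ℕ) + (p.2 : ℕ) - 2 = (q.1 : ℕ) + (q.2 : ℕ) - 2 :=
      congrArg Prod.snd h
    have hp1 := hpos p.1; have hp2 := hpos p.2
    have hq1 := hpos q.1; have hq2 := hpos q.2
    have hsums : (p.1 : ℕ) + (p.2 : ℕ) = (q.1 : ℕ) + (q.2 : ℕ) := by omega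
    have hiff : ((p.1 : ℕ) ≤ (p.2 : ℕ)) ↔ ((q.1 : ℕ) ≤ (q.2 : ℕ)) :=
      decide_eq_decide.mp h1
    by_cases hle : (p.1 : ℕ) ≤ (p.2 : ℕ)
    · have hle' := hiff.mp hle
      obtain ⟨e1, e2⟩ := hS.2 _ p.1.2 _ p.2.2 _ q.1.2 _ q.2.2 hle hle' hsums
      exact Prod.ext (Subtype.ext e1) (Subtype.ext e2)
    · have hle2 : (p.2 : ℕ) ≤ (p.1 : ℕ) := le_of_not_ge hle
      have hle2' : (q.2 : ℕ) ≤ (q.1 : ℕ) := le_of_not_ge (fun hc => hle (hiff.mpr hc))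
      obtain ⟨e1, e2⟩ := hS.2 _ p.2.2 _ p.1.2 _ q.2.2 _ q.1.2 hle2 hle2'
        (by omega)
      exact Prod.ext (Subtype.ext e2) (Subtype.ext e1)
  set g : Bool × ℕ → ℝ := fun q => t ^ (q.2 + 2) with hg_def
  have hg_each : ∀ b : Bool, Summable fun n : ℕ => g (b, n) := by
    intro b
    exact (summable_nat_add_iff 2).2 hgeo
  have hgsum : Summable g := by
    refine (summable_prod_of_nonneg ?_).2 ⟨hg_each, ?_⟩
    · intro q; exact pow_nonneg ht0.le _
    · exact Summable.of_finite
  have hfsum : Summable (fun p : S × S => t ^ ((p.1 : ℕ) + (p.2 : ℕ))) := by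
    have := hsum.mul_of_nonneg hsum (fun s => pow_nonneg ht0.le _)
      (fun s => pow_nonneg ht0.le _)
    refine this.congr fun p => ?_
    exact (pow_add t _ _).symm
  have key : (genFun S t) ^ 2 ≤ 2 * t / (1 - t) := by
    have hprod : (genFun S t) ^ 2 = ∑' p : S × S, t ^ ((p.1 : ℕ) + (p.2 : ℕ)) := by
      rw [sq, genFun, tsum_mul_tsum_of_summable_norm hnorm hnorm]
      exact tsum_congr fun p => (pow_add t _ _).symm
    have hle : (∑' p : S × S, t ^ ((p.1 : ℕ) + (p.2 : ℕ))) ≤ ∑' q : Bool × ℕ, g q := by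
      refine Summable.tsum_le_tsum_of_inj i hi (fun c _ => pow_nonneg ht0.le _) (fun p => ?_)
        hfsum hgsum
      have hp1 := hpos p.1; have hp2 := hpos p.2
      apply le_of_eq
      simp only [hi_def, hg_def]
      congr 1
      omega
    have hval : (∑' q : Bool × ℕ, g q) = 2 * (t ^ 2 * (1 - t)⁻¹) := by
      rw [Summable.tsum_prod' hgsum hg_each]
      have hinner : ∀ b : Bool, (∑' n : ℕ, g (b, n)) = t ^ 2 * (1 - t)⁻¹ := by
        intro b
        have : (fun n : ℕ => g (b, n)) = fun n : ℕ => t ^ 2 * t ^ n := by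
          funext n; simp [hg_def, pow_add, mul_comm]
        rw [this, tsum_mul_left, tsum_geometric_of_lt_one ht0.le ht1]
      rw [tsum_fintype]
      simp [hinner]
    have hfin : 2 * (t ^ 2 * (1 - t)⁻¹) ≤ 2 * t / (1 - t) := by
      rw [div_eq_mul_inv]
      have ht2 : t ^ 2 ≤ t := by nlinarith
      have hinv : (0 : ℝ) ≤ (1 - t)⁻¹ := le_of_lt (inv_pos.2 h1t)
      nlinarith
    calc (genFun S t) ^ 2 = ∑' p : S × S, t ^ ((p.1 : ℕ) + (p.2 : ℕ)) := hprod
      _ ≤ ∑' q : Bool × ℕ, g q := hle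
      _ = 2 * (t ^ 2 * (1 - t)⁻¹) := hval
      _ ≤ 2 * t / (1 - t) := hfin
  calc genFun S t = Real.sqrt ((genFun S t) ^ 2) := (Real.sqrt_sq hf0).symm
    _ ≤ Real.sqrt (2 * t / (1 - t)) := Real.sqrt_le_sqrt key
end

section
/- Let g ≥ 2 be an integer and α > 1/2 a real number. Then there exists a B₂[g]-set B_α ⊆ ℕ* such that ∑_{b∈B_α} b^{-α} = sup{∑_{b∈B} b^{-α} : B ⊆ ℕ* a B₂[g]-set}, and this supremum is finite. -/
open scoped ENNReal

/-- A set of positive integers is a `B₂[g]`-set: for every `k`, there are at most `g`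
pairs `(x, y)` with `x ≤ y`, `x, y ∈ B` and `x + y = k`. -/
def IsB2g (g : ℕ) (B : Set ℕ) : Prop :=
  (∀ b ∈ B, 0 < b) ∧
    ∀ k : ℕ, Nat.card {p : ℕ × ℕ | p.1 ∈ B ∧ p.2 ∈ B ∧ p.1 ≤ p.2 ∧ p.1 + p.2 = k} ≤ g

namespace B2gAux

open Classical Set Filter

noncomputable def phi (α : ℝ) (b : ℕ) : ℝ≥0∞ := (b : ℝ≥0∞) ^ (-α)

noncomputable def fsum (α : ℝ) (A : Set ℕ) : ℝ≥0∞ := ∑' b : A, phi α b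

lemma fsum_def (α : ℝ) (A : Set ℕ) : fsum α A = ∑' b : A, ((b : ℕ) : ℝ≥0∞) ^ (-α) := rfl

lemma isB2g_empty (g : ℕ) : IsB2g g (∅ : Set ℕ) := by
  constructor
  · intro b hb; exact absurd hb (Set.notMem_empty b)
  · intro k
    have : {p : ℕ × ℕ | p.1 ∈ (∅ : Set ℕ) ∧ p.2 ∈ (∅ : Set ℕ) ∧ p.1 ≤ p.2 ∧ p.1 + p.2 = k} = ∅ := by
      ext p; simp
    rw [this]
    simp

lemma fsum_mono (α : ℝ) {A C : Set ℕ} (h : A ⊆ C) : fsum α A ≤ fsum α C :=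
  ENNReal.tsum_mono_subtype (phi α) h

lemma fsum_split (α : ℝ) (A : Set ℕ) (m : ℕ) :
    fsum α A = fsum α (A ∩ Set.Iio m) + fsum α (A ∩ Set.Ici m) := by
  unfold fsum
  rw [tsum_subtype A (phi α), tsum_subtype (A ∩ Set.Iio m) (phi α),
    tsum_subtype (A ∩ Set.Ici m) (phi α), ← ENNReal.tsum_add]
  apply tsum_congr
  intro b
  rcases lt_or_ge b m with hb | hb
  · by_cases hA : b ∈ A <;>
      simp [Set.indicator_apply, hA, hb, not_le.2 hb]
  · by_cases hA : b ∈ A <;>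
      simp [Set.indicator_apply, hA, hb, not_lt.2 hb]

/-- Counting bound: the number of elements of a `B₂[g]`-set in `[2^j, 2^(j+1))` is at most
`2^((j+3)/2) * g`. -/
lemma block_card {g : ℕ} (hg : 1 ≤ g) {B : Set ℕ} (hB : IsB2g g B) (j : ℕ) :
    ((Finset.Ico (2^j) (2^(j+1))).filter (· ∈ B)).card ≤ 2^((j+3)/2) * g := by
  set s : Finset ℕ := (Finset.Ico (2^j) (2^(j+1))).filter (· ∈ B) with hs
  set P : Finset (ℕ × ℕ) := (s ×ˢ s).filter (fun p => p.1 ≤ p.2) with hP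
  have hsq : s.card ^ 2 ≤ 2 * P.card := by
    have hcover : s ×ˢ s ⊆ P ∪ P.image Prod.swap := by
      intro p hp
      rcases le_total p.1 p.2 with h | h
      · exact Finset.mem_union_left _ (Finset.mem_filter.2 ⟨hp, h⟩)
      · apply Finset.mem_union_right
        refine Finset.mem_image.2 ⟨p.swap, ?_, p.swap_swap⟩
        refine Finset.mem_filter.2 ⟨?_, h⟩
        rcases Finset.mem_product.1 hp with ⟨h1, h2⟩
        exact Finset.mem_product.2 ⟨h2, h1⟩
    calc s.card ^ 2 = (s ×ˢ s).card := by rw [Finset.card_product]; ring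
      _ ≤ (P ∪ P.image Prod.swap).card := Finset.card_le_card hcover
      _ ≤ P.card + (P.image Prod.swap).card := Finset.card_union_le P (P.image Prod.swap)
      _ ≤ P.card + P.card := by
          have h := Finset.card_image_le (s := P) (f := Prod.swap)
          omega
      _ = 2 * P.card := by ring
  have hPcard : P.card ≤ 2^(j+1) * g := by
    have hmaps : ∀ p ∈ P, p.1 + p.2 ∈ Finset.Ico (2^(j+1)) (2^(j+2)) := by
      intro p hp
      rcases Finset.mem_filter.1 hp with ⟨hp1, _⟩
      rcases Finset.mem_product.1 hp1 with ⟨h1, h2⟩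
      have h1 := Finset.mem_filter.1 h1
      have h2 := Finset.mem_filter.1 h2
      rcases Finset.mem_Ico.1 h1.1 with ⟨ha, hb⟩
      rcases Finset.mem_Ico.1 h2.1 with ⟨hc, hd⟩
      refine Finset.mem_Ico.2 ⟨?_, ?_⟩
      · have : 2^(j+1) = 2^j + 2^j := by ring
        omega
      · have : 2^(j+2) = 2^(j+1) + 2^(j+1) := by ring
        omega
    rw [Finset.card_eq_sum_card_fiberwise hmaps]
    have hfib : ∀ k ∈ Finset.Ico (2^(j+1)) (2^(j+2)),
        (P.filter (fun p => p.1 + p.2 = k)).card ≤ g := by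
      intro k _
      have hsub : ↑(P.filter (fun p => p.1 + p.2 = k)) ⊆
          {p : ℕ × ℕ | p.1 ∈ B ∧ p.2 ∈ B ∧ p.1 ≤ p.2 ∧ p.1 + p.2 = k} := by
        intro p hp
        simp only [Finset.coe_filter, Set.mem_setOf_eq] at hp
        rcases hp with ⟨hp1, hk⟩
        rcases Finset.mem_filter.1 hp1 with ⟨hp2, hle⟩
        rcases Finset.mem_product.1 hp2 with ⟨h1, h2⟩
        exact ⟨(Finset.mem_filter.1 h1).2, (Finset.mem_filter.1 h2).2, hle, hk⟩
      have hfin : ({p : ℕ × ℕ | p.1 ∈ B ∧ p.2 ∈ B ∧ p.1 ≤ p.2 ∧ p.1 + p.2 = k}).Finite := by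
        apply Set.Finite.subset (Set.finite_Iic ((k, k) : ℕ × ℕ))
        intro p hp
        rcases hp with ⟨_, _, _, hk⟩
        simp only [Set.mem_Iic, Prod.le_def]
        omega
      calc (P.filter (fun p => p.1 + p.2 = k)).card
          = (↑(P.filter (fun p => p.1 + p.2 = k)) : Set (ℕ × ℕ)).ncard :=
            (Set.ncard_coe_finset _).symm
        _ ≤ ({p : ℕ × ℕ | p.1 ∈ B ∧ p.2 ∈ B ∧ p.1 ≤ p.2 ∧ p.1 + p.2 = k}).ncard :=
            Set.ncard_le_ncard hsub hfin
        _ = Nat.card {p : ℕ × ℕ | p.1 ∈ B ∧ p.2 ∈ B ∧ p.1 ≤ p.2 ∧ p.1 + p.2 = k} :=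
            (Nat.card_coe_set_eq _).symm
        _ ≤ g := hB.2 k
    calc ∑ k ∈ Finset.Ico (2^(j+1)) (2^(j+2)), (P.filter (fun p => p.1 + p.2 = k)).card
        ≤ ∑ _k ∈ Finset.Ico (2^(j+1)) (2^(j+2)), g := Finset.sum_le_sum hfib
      _ = (2^(j+2) - 2^(j+1)) * g := by rw [Finset.sum_const, Nat.card_Ico, smul_eq_mul]
      _ = 2^(j+1) * g := by
          have h : (2:ℕ)^(j+2) - 2^(j+1) = 2^(j+1) := by
            rw [pow_succ]
            omega
          rw [h]
  by_contra hcon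
  push_neg at hcon
  have h1 : (2^((j+3)/2) * g + 1)^2 ≤ s.card^2 := Nat.pow_le_pow_left hcon 2
  have h2 : s.card^2 ≤ 2^(j+2) * g := by
    calc s.card^2 ≤ 2 * P.card := hsq
      _ ≤ 2 * (2^(j+1) * g) := by omega
      _ = 2^(j+2) * g := by ring
  have h3 : 2^(j+2) * g < (2^((j+3)/2) * g + 1)^2 := by
    have e1 : 2^(j+2) ≤ 2^(((j+3)/2)*2) := Nat.pow_le_pow_right (by norm_num) (by omega)
    have e2 : 2^(j+2) * g ≤ (2^((j+3)/2) * g)^2 := by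
      calc 2^(j+2) * g ≤ 2^(((j+3)/2)*2) * (g * g) :=
            Nat.mul_le_mul e1 (Nat.le_mul_of_pos_left g hg)
        _ = (2^((j+3)/2) * g)^2 := by rw [pow_mul]; ring
    calc 2^(j+2) * g ≤ (2^((j+3)/2) * g)^2 := e2
      _ < (2^((j+3)/2) * g + 1)^2 := Nat.pow_lt_pow_left (lt_add_one _) two_ne_zero
  omega

lemma block_sum {g : ℕ} (hg : 1 ≤ g) {B : Set ℕ} (hB : IsB2g g B) {α : ℝ} (hα : (0:ℝ) ≤ α)
    (j : ℕ) :
    fsum α (B ∩ Set.Ico (2^j) (2^(j+1))) ≤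
      ((2^((j+3)/2) * g : ℕ) : ℝ≥0∞) * ((2:ℝ≥0∞)^(j:ℕ)) ^ (-α) := by
  set t : Finset ℕ := (Finset.Ico (2^j) (2^(j+1))).filter (· ∈ B) with ht
  have hset : B ∩ Set.Ico (2^j) (2^(j+1)) = (↑t : Set ℕ) := by
    ext b
    simp only [ht, Set.mem_inter_iff, Set.mem_Ico, Finset.coe_filter, Finset.mem_Ico,
      Set.mem_setOf_eq]
    tauto
  have hpt : ∀ b ∈ t, phi α b ≤ ((2:ℝ≥0∞)^(j:ℕ)) ^ (-α) := by
    intro b hb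
    have hge : 2^j ≤ b := (Finset.mem_Ico.1 (Finset.mem_filter.1 hb).1).1
    have h2 : (2:ℝ≥0∞)^(j:ℕ) ≤ (b:ℝ≥0∞) := by
      calc (2:ℝ≥0∞)^(j:ℕ) = ((2^j : ℕ) : ℝ≥0∞) := by push_cast; ring
        _ ≤ (b:ℝ≥0∞) := by exact_mod_cast hge
    unfold phi
    rw [ENNReal.rpow_neg, ENNReal.rpow_neg]
    exact ENNReal.inv_le_inv.2 (ENNReal.rpow_le_rpow h2 hα)
  calc fsum α (B ∩ Set.Ico (2^j) (2^(j+1))) = ∑' b : (↑t : Set ℕ), phi α b := by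
        rw [fsum, hset]
    _ = ∑ b ∈ t, phi α b := Finset.tsum_subtype' t (phi α)
    _ ≤ t.card • ((2:ℝ≥0∞)^(j:ℕ)) ^ (-α) := Finset.sum_le_card_nsmul _ _ _ hpt
    _ = (t.card : ℝ≥0∞) * ((2:ℝ≥0∞)^(j:ℕ)) ^ (-α) := by rw [nsmul_eq_mul]
    _ ≤ ((2^((j+3)/2) * g : ℕ) : ℝ≥0∞) * ((2:ℝ≥0∞)^(j:ℕ)) ^ (-α) :=
        mul_le_mul_left (by exact_mod_cast block_card hg hB j) _

noncomputable def rr (α : ℝ) : ℝ≥0∞ := (2:ℝ≥0∞) ^ ((1:ℝ)/2 - α)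

lemma rr_lt_one {α : ℝ} (hα : 1/2 < α) : rr α < 1 := by
  have h := ENNReal.rpow_lt_rpow_of_exponent_lt (x := 2) (y := (1:ℝ)/2 - α) (z := 0)
    ENNReal.one_lt_two (by norm_num) (by linarith)
  simpa [rr, ENNReal.rpow_zero] using h

lemma term_bound (g : ℕ) {α : ℝ} (hα : 1/2 < α) (j : ℕ) :
    ((2^((j+3)/2) * g : ℕ) : ℝ≥0∞) * ((2:ℝ≥0∞)^(j:ℕ)) ^ (-α) ≤ 4 * g * rr α ^ j := by
  have h2 : ((2:ℝ≥0∞))^(j:ℕ) = (2:ℝ≥0∞) ^ (j:ℝ) := (ENNReal.rpow_natCast 2 j).symm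
  have hcast : ((2^((j+3)/2) * g : ℕ) : ℝ≥0∞)
      = (2:ℝ≥0∞) ^ ((((j+3)/2 : ℕ)) : ℝ) * (g:ℝ≥0∞) := by
    push_cast
    rw [ENNReal.rpow_natCast]
  have hexp : ((((j+3)/2 : ℕ)) : ℝ) ≤ (j:ℝ)/2 + 2 := by
    have hmul : ((j+3)/2 : ℕ) * 2 ≤ j + 3 := Nat.div_mul_le_self (j+3) 2
    have : ((((j+3)/2 : ℕ)) : ℝ) * 2 ≤ (j:ℝ) + 3 := by exact_mod_cast hmul
    linarith
  have hL : (2:ℝ≥0∞) ^ ((((j+3)/2 : ℕ)) : ℝ) ≤ (2:ℝ≥0∞) ^ ((j:ℝ)/2 + 2) :=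
    ENNReal.rpow_le_rpow_of_exponent_le one_le_two hexp
  have h4 : (2:ℝ≥0∞) ^ (2:ℝ) = 4 := by
    rw [show (2:ℝ) = ((2:ℕ):ℝ) by norm_num, ENNReal.rpow_natCast]
    norm_num
  calc ((2^((j+3)/2) * g : ℕ) : ℝ≥0∞) * ((2:ℝ≥0∞)^(j:ℕ)) ^ (-α)
      ≤ ((2:ℝ≥0∞) ^ ((j:ℝ)/2 + 2) * g) * ((2:ℝ≥0∞) ^ (j:ℝ)) ^ (-α) := by
        rw [hcast, h2]
        gcongr
    _ = 4 * g * ((2:ℝ≥0∞) ^ ((j:ℝ)/2) * (2:ℝ≥0∞) ^ ((j:ℝ) * (-α))) := by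
        rw [ENNReal.rpow_add _ _ two_ne_zero ENNReal.ofNat_ne_top, h4,
          ← ENNReal.rpow_mul]
        ring
    _ = 4 * g * rr α ^ j := by
        rw [← ENNReal.rpow_add _ _ two_ne_zero ENNReal.ofNat_ne_top]
        congr 1
        rw [rr, ← ENNReal.rpow_natCast ((2:ℝ≥0∞) ^ ((1:ℝ)/2 - α)) j, ← ENNReal.rpow_mul]
        congr 1
        ring

noncomputable def eps (g : ℕ) (α : ℝ) (J : ℕ) : ℝ≥0∞ := 4 * g * (1 - rr α)⁻¹ * rr α ^ J

lemma tail_bound {g : ℕ} (hg : 1 ≤ g) {B : Set ℕ} (hB : IsB2g g B) {α : ℝ} (hα : 1/2 < α)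
    (J : ℕ) : fsum α (B ∩ Set.Ici (2^J)) ≤ eps g α J := by
  have hα0 : (0:ℝ) ≤ α := by linarith
  have hcover : B ∩ Set.Ici (2^J) ⊆ ⋃ i : ℕ, (B ∩ Set.Ico (2^(J+i)) (2^(J+i+1))) := by
    rintro b ⟨hbB, hb⟩
    simp only [Set.mem_Ici] at hb
    have hb0 : b ≠ 0 := by
      have : (0:ℕ) < 2^J := Nat.pow_pos (by norm_num)
      omega
    set i := Nat.log 2 b with hi
    have h1 : 2^i ≤ b := Nat.pow_log_le_self 2 hb0
    have h2 : b < 2^(i+1) := Nat.lt_pow_succ_log_self one_lt_two b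
    have hJi : J ≤ i := by
      by_contra h
      push_neg at h
      have : 2^(i+1) ≤ 2^J := Nat.pow_le_pow_right (by norm_num) h
      omega
    refine Set.mem_iUnion.2 ⟨i - J, hbB, ?_, ?_⟩ <;>
      rw [Nat.add_sub_cancel' hJi] <;> omega
  calc fsum α (B ∩ Set.Ici (2^J))
      ≤ ∑' b : (⋃ i : ℕ, (B ∩ Set.Ico (2^(J+i)) (2^(J+i+1))) : Set ℕ), phi α b :=
        fsum_mono α hcover
    _ ≤ ∑' i : ℕ, fsum α (B ∩ Set.Ico (2^(J+i)) (2^(J+i+1))) :=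
        ENNReal.tsum_iUnion_le_tsum (phi α) _
    _ ≤ ∑' i : ℕ, 4 * g * rr α ^ (J+i) :=
        ENNReal.tsum_le_tsum fun i =>
          le_trans (block_sum hg hB hα0 (J+i)) (term_bound g hα (J+i))
    _ = 4 * g * rr α ^ J * ∑' i : ℕ, rr α ^ i := by
        rw [← ENNReal.tsum_mul_left]
        exact tsum_congr fun i => by rw [pow_add]; ring
    _ = eps g α J := by rw [ENNReal.tsum_geometric, eps]; ring

lemma eps_ne_top {g : ℕ} {α : ℝ} (hα : 1/2 < α) (J : ℕ) : eps g α J ≠ ⊤ := by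
  have hr := rr_lt_one hα
  have h1 : (1 - rr α) ≠ 0 := by
    simp only [ne_eq, tsub_eq_zero_iff_le, not_le]
    exact hr
  have h2 : rr α ^ J ≠ ⊤ := ENNReal.pow_ne_top (by exact (lt_of_lt_of_le hr le_top).ne)
  rw [eps]
  exact ENNReal.mul_ne_top (ENNReal.mul_ne_top
    (ENNReal.mul_ne_top (by norm_num) (ENNReal.natCast_ne_top g)) (ENNReal.inv_ne_top.2 h1)) h2

lemma eps_tendsto {g : ℕ} {α : ℝ} (hα : 1/2 < α) :
    Filter.Tendsto (fun J => eps g α J) Filter.atTop (nhds 0) := by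
  have hr := rr_lt_one hα
  have h0 : Filter.Tendsto (fun J : ℕ => rr α ^ J) Filter.atTop (nhds 0) :=
    ENNReal.tendsto_pow_atTop_nhds_zero_of_lt_one hr
  have := ENNReal.Tendsto.const_mul (a := 4 * g * (1 - rr α)⁻¹) h0
    (Or.inr (by
      have h1 : (1 - rr α) ≠ 0 := by
        simp only [ne_eq, tsub_eq_zero_iff_le, not_le]; exact hr
      exact ENNReal.mul_ne_top (ENNReal.mul_ne_top (by norm_num) (ENNReal.natCast_ne_top g))
        (ENNReal.inv_ne_top.2 h1)))
  simpa [eps] using this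

lemma fsum_le_eps_zero {g : ℕ} (hg : 1 ≤ g) {B : Set ℕ} (hB : IsB2g g B) {α : ℝ}
    (hα : 1/2 < α) : fsum α B ≤ eps g α 0 := by
  have hsub : B ⊆ Set.Ici (2^0) := by
    intro b hb
    exact hB.1 b hb
  have : B = B ∩ Set.Ici (2^0) := by rw [Set.inter_eq_self_of_subset_left hsub]
  rw [this]
  exact tail_bound hg hB hα 0

end B2gAux

open B2gAux Filter in
theorem exists_B2g_maximizing_rpow_sum (g : ℕ) (hg : 2 ≤ g) (α : ℝ) (hα : 1 / 2 < α) :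
    ∃ B : Set ℕ, IsB2g g B ∧
      (∑' b : B, ((b : ℕ) : ℝ≥0∞) ^ (-α)) =
        (⨆ T : {T : Set ℕ // IsB2g g T}, ∑' b : T.1, ((b : ℕ) : ℝ≥0∞) ^ (-α)) ∧
      (⨆ T : {T : Set ℕ // IsB2g g T}, ∑' b : T.1, ((b : ℕ) : ℝ≥0∞) ^ (-α)) ≠ ⊤ := by
  classical
  have hg1 : 1 ≤ g := by omega
  have hSrw : (⨆ T : {T : Set ℕ // IsB2g g T}, ∑' b : T.1, ((b : ℕ) : ℝ≥0∞) ^ (-α))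
      = ⨆ T : {T : Set ℕ // IsB2g g T}, fsum α T.1 := rfl
  set S : ℝ≥0∞ := ⨆ T : {T : Set ℕ // IsB2g g T}, fsum α T.1 with hS
  have hS_ne_top : S ≠ ⊤ := by
    have hle : S ≤ eps g α 0 := iSup_le fun T => fsum_le_eps_zero hg1 T.2 hα
    exact fun h => (eps_ne_top hα 0) (top_le_iff.1 (h ▸ hle))
  -- approximating sequence
  have hseq : ∀ n : ℕ, ∃ T : Set ℕ, IsB2g g T ∧ S ≤ fsum α T + ((n:ℝ≥0∞))⁻¹ := by
    intro n
    by_cases hS0 : S = 0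
    · exact ⟨∅, isB2g_empty g, by rw [hS0]; exact zero_le⟩
    by_cases hn : ((n:ℝ≥0∞))⁻¹ = ⊤
    · exact ⟨∅, isB2g_empty g, by rw [hn, add_top]; exact le_top⟩
    have hinv0 : ((n:ℝ≥0∞))⁻¹ ≠ 0 := ENNReal.inv_ne_zero.2 (ENNReal.natCast_ne_top n)
    have hlt : S - ((n:ℝ≥0∞))⁻¹ < S := ENNReal.sub_lt_self hS_ne_top hS0 hinv0
    rw [hS] at hlt
    obtain ⟨T, hT⟩ := lt_iSup_iff.1 hlt
    exact ⟨T.1, T.2, le_of_lt (ENNReal.lt_add_of_sub_lt_right (Or.inl hS_ne_top) hT)⟩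
  choose T hT1 hT2 using hseq
  -- ultrafilter limit
  let U : Ultrafilter ℕ := Ultrafilter.of Filter.atTop
  have hU : (U : Filter ℕ) ≤ Filter.atTop := Ultrafilter.of_le _
  set B : Set ℕ := {b | {n | b ∈ T n} ∈ U} with hB
  have hB2 : IsB2g g B := by
    constructor
    · intro b hb
      obtain ⟨n, hn⟩ := Filter.nonempty_of_mem (hb : {n | b ∈ T n} ∈ U)
      exact (hT1 n).1 b hn
    · intro k
      by_contra hcon
      push_neg at hcon
      have hfinB : ({p : ℕ × ℕ | p.1 ∈ B ∧ p.2 ∈ B ∧ p.1 ≤ p.2 ∧ p.1 + p.2 = k}).Finite := by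
        apply Set.Finite.subset (Set.finite_Iic ((k, k) : ℕ × ℕ))
        rintro p ⟨_, _, _, hk⟩
        simp only [Set.mem_Iic, Prod.le_def]
        omega
      have hcard : g + 1 ≤ ({p : ℕ × ℕ | p.1 ∈ B ∧ p.2 ∈ B ∧ p.1 ≤ p.2 ∧ p.1 + p.2 = k}).ncard := by
        rw [← Nat.card_coe_set_eq]
        omega
      obtain ⟨t, hsub, htc⟩ := Set.exists_subset_card_eq hcard
      have htfin : t.Finite := hfinB.subset hsub
      have hev : ∀ p ∈ t, {n | p.1 ∈ T n ∧ p.2 ∈ T n} ∈ U := by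
        intro p hp
        have h1 : {n | p.1 ∈ T n} ∈ U := (hsub hp).1
        have h2 : {n | p.2 ∈ T n} ∈ U := (hsub hp).2.1
        exact Filter.inter_mem h1 h2
      have hall : (⋂ p ∈ t, {n | p.1 ∈ T n ∧ p.2 ∈ T n}) ∈ U :=
        (Filter.biInter_mem htfin).2 hev
      obtain ⟨n, hn⟩ := Filter.nonempty_of_mem hall
      simp only [Set.mem_iInter] at hn
      have hsubn : t ⊆ {p : ℕ × ℕ | p.1 ∈ T n ∧ p.2 ∈ T n ∧ p.1 ≤ p.2 ∧ p.1 + p.2 = k} := by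
        intro p hp
        exact ⟨(hn p hp).1, (hn p hp).2, (hsub hp).2.2.1, (hsub hp).2.2.2⟩
      have hfinn : ({p : ℕ × ℕ | p.1 ∈ T n ∧ p.2 ∈ T n ∧ p.1 ≤ p.2 ∧ p.1 + p.2 = k}).Finite := by
        apply Set.Finite.subset (Set.finite_Iic ((k, k) : ℕ × ℕ))
        rintro p ⟨_, _, _, hk⟩
        simp only [Set.mem_Iic, Prod.le_def]
        omega
      have hge : g + 1 ≤ Nat.card {p : ℕ × ℕ | p.1 ∈ T n ∧ p.2 ∈ T n ∧ p.1 ≤ p.2 ∧ p.1 + p.2 = k} := by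
        rw [Nat.card_coe_set_eq]
        calc g + 1 = t.ncard := htc.symm
          _ ≤ _ := Set.ncard_le_ncard hsubn hfinn
      have := (hT1 n).2 k
      omega
  -- B attains the supremum
  have hle1 : fsum α B ≤ S := le_iSup (fun T : {T : Set ℕ // IsB2g g T} => fsum α T.1) ⟨B, hB2⟩
  have hBfin : fsum α B ≠ ⊤ := fun h => (eps_ne_top hα 0) (top_le_iff.1 (h ▸ fsum_le_eps_zero hg1 hB2 hα))
  have key : ∀ J : ℕ, S ≤ fsum α B + eps g α J := by
    intro J
    apply ENNReal.le_of_forall_pos_le_add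
    intro δ hδ _
    obtain ⟨N, hN⟩ := ENNReal.exists_inv_nat_lt (a := (δ : ℝ≥0∞))
      (by exact_mod_cast hδ.ne')
    have hEb : ∀ b : ℕ, {n | (b ∈ T n ↔ b ∈ B)} ∈ U := by
      intro b
      by_cases hb : b ∈ B
      · exact Filter.mem_of_superset (hb : {n | b ∈ T n} ∈ U)
          (fun n hn => iff_of_true hn hb)
      · have hnm : {n | b ∈ T n} ∉ U := hb
        have hc : {n | b ∈ T n}ᶜ ∈ U := Ultrafilter.compl_mem_iff_notMem.2 hnm
        exact Filter.mem_of_superset hc (fun n hn => iff_of_false hn hb)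
    have hE : {n | ∀ b < 2^J, (b ∈ T n ↔ b ∈ B)} ∈ U := by
      have hmem : (⋂ b ∈ Set.Iio ((2:ℕ)^J), {n | (b ∈ T n ↔ b ∈ B)}) ∈ U :=
        (Filter.biInter_mem (Set.finite_Iio _)).2 (fun b _ => hEb b)
      refine Filter.mem_of_superset hmem ?_
      intro n hn
      simp only [Set.mem_iInter] at hn
      exact fun b hb => hn b hb
    have hgeN : {n | N ≤ n} ∈ U := hU (Filter.mem_atTop N)
    obtain ⟨n, hnE, hnge⟩ := Filter.nonempty_of_mem (Filter.inter_mem hE hgeN)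
    have hTB : T n ∩ Set.Iio (2^J) = B ∩ Set.Iio (2^J) := by
      ext b
      constructor
      · rintro ⟨h1, h2⟩
        exact ⟨(hnE b h2).1 h1, h2⟩
      · rintro ⟨h1, h2⟩
        exact ⟨(hnE b h2).2 h1, h2⟩
    have hfsumTn : fsum α (T n) ≤ fsum α B + eps g α J := by
      rw [fsum_split α (T n) (2^J), hTB]
      exact add_le_add (fsum_mono α Set.inter_subset_left) (tail_bound hg1 (hT1 n) hα J)
    have hinv : ((n:ℝ≥0∞))⁻¹ ≤ (δ : ℝ≥0∞) := by
      calc ((n:ℝ≥0∞))⁻¹ ≤ ((N:ℝ≥0∞))⁻¹ := ENNReal.inv_le_inv.2 (by exact_mod_cast hnge)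
        _ ≤ (δ : ℝ≥0∞) := hN.le
    calc S ≤ fsum α (T n) + ((n:ℝ≥0∞))⁻¹ := hT2 n
      _ ≤ (fsum α B + eps g α J) + (δ:ℝ≥0∞) := add_le_add hfsumTn hinv
  have htend : Filter.Tendsto (fun J => fsum α B + eps g α J) Filter.atTop (nhds (fsum α B + 0)) :=
    tendsto_const_nhds.add (eps_tendsto hα)
  have hle2 : S ≤ fsum α B := by
    have := ge_of_tendsto' htend key
    simpa using this
  refine ⟨B, hB2, ?_, ?_⟩
  · rw [hSrw]
    exact le_antisymm hle1 hle2
  · rw [hSrw]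
    exact hS_ne_top
end

section
/- For every real number α there exists a sum-free set F_α ⊆ ℕ* such that ∑_{f∈F_α} f^{-α} = sup{∑_{f∈F} f^{-α} : F ⊆ ℕ* sum-free}, where the sums and the supremum are taken in [0,+∞] (for α ≤ 1 the supremum is +∞ and is attained, e.g. by the odd numbers). -/
open scoped ENNReal NNReal
open Set Filter

/-- A set of positive integers is sum-free: no solutions to `x + y = z` within the set. -/
def IsSumFree (F : Set ℕ) : Prop :=
  (∀ f ∈ F, 0 < f) ∧ ∀ x ∈ F, ∀ y ∈ F, x + y ∉ F

namespace SumFreeAux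

noncomputable def g (α : ℝ) (n : ℕ) : ℝ≥0∞ := (n : ℝ≥0∞) ^ (-α)

noncomputable def G (α : ℝ) (T : Set ℕ) : ℝ≥0∞ := ∑' n : ℕ, T.indicator (g α) n

noncomputable def s (α : ℝ) : ℝ≥0∞ :=
  ⨆ T : {T : Set ℕ // IsSumFree T}, ∑' f : T.1, ((f : ℕ) : ℝ≥0∞) ^ (-α)

lemma val_eq (α : ℝ) (T : Set ℕ) :
    (∑' f : T, ((f : ℕ) : ℝ≥0∞) ^ (-α)) = G α T := tsum_subtype T (g α)

lemma s_eq (α : ℝ) : s α = ⨆ T : {T : Set ℕ // IsSumFree T}, G α T.1 := by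
  unfold s; congr 1; funext T; exact val_eq α T.1

lemma le_s (α : ℝ) (T : Set ℕ) (hT : IsSumFree T) : G α T ≤ s α := by
  rw [s_eq]; exact le_iSup (fun T : {T : Set ℕ // IsSumFree T} => G α T.1) ⟨T, hT⟩

lemma one_le_s (α : ℝ) : 1 ≤ s α := by
  have h1 : IsSumFree {1} := by
    constructor
    · rintro f rfl; norm_num
    · rintro x rfl y rfl h; simp at h
  have hval : G α {1} = 1 := by
    rw [← val_eq]
    rw [tsum_singleton 1 (fun n : ℕ => ((n : ℕ) : ℝ≥0∞) ^ (-α))]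
    simp [ENNReal.one_rpow]
  calc (1 : ℝ≥0∞) = G α {1} := hval.symm
    _ ≤ s α := le_s α {1} h1

def Ext (n : ℕ) (S : Set ℕ) : Set (Set ℕ) :=
  {T | IsSumFree T ∧ ∀ m < n, (m ∈ T ↔ m ∈ S)}

noncomputable def c (α : ℝ) (n : ℕ) (S : Set ℕ) : ℝ≥0∞ := ⨆ T ∈ Ext n S, G α T

noncomputable def D (α : ℝ) : ℕ → Set ℕ
  | 0 => ∅
  | n + 1 => if c α (n + 1) (D α n ∪ {n}) = s α then D α n ∪ {n} else D α n

lemma D_subset_Iio (α : ℝ) : ∀ n, D α n ⊆ Set.Iio n := by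
  intro n
  induction n with
  | zero => simp [D]
  | succ n ih =>
    rw [D]
    split
    · intro m hm
      rcases hm with hm | hm
      · exact lt_trans (ih hm) (Nat.lt_succ_self n)
      · simp at hm; simp [hm]
    · exact fun m hm => lt_trans (ih hm) (Nat.lt_succ_self n)

lemma D_mono (α : ℝ) : ∀ n, D α n ⊆ D α (n + 1) := by
  intro n
  rw [D]
  split
  · exact Set.subset_union_left
  · exact le_refl _

lemma D_mono' (α : ℝ) : Monotone (D α) :=
  monotone_nat_of_le_succ (D_mono α)

lemma D_agree (α : ℝ) {n k : ℕ} (h : n ≤ k) : ∀ m < n, (m ∈ D α k ↔ m ∈ D α n) := by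
  induction k with
  | zero =>
    intro m hm
    have : n = 0 := Nat.le_zero.mp h
    subst this
    exact Iff.rfl
  | succ k ih =>
    intro m hm
    rcases Nat.lt_or_ge n (k + 1) with h' | h'
    · have hnk : n ≤ k := Nat.lt_succ_iff.mp h'
      rw [← ih hnk m hm]
      rw [D]
      split
      · constructor
        · rintro (h1 | h1)
          · exact h1
          · simp at h1; omega
        · exact fun h1 => Or.inl h1
      · exact Iff.rfl
    · have : n = k + 1 := le_antisymm h h'
      subst this; exact Iff.rfl

noncomputable def F (α : ℝ) : Set ℕ := ⋃ n, D α n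

lemma F_agree (α : ℝ) (n : ℕ) : ∀ m < n, (m ∈ F α ↔ m ∈ D α n) := by
  intro m hm
  constructor
  · rintro ⟨S, ⟨k, rfl⟩, hk⟩
    rcases le_or_gt n k with h | h
    · exact (D_agree α h m hm).mp hk
    · exact D_mono' α h.le hk
  · intro h; exact ⟨D α n, ⟨n, rfl⟩, h⟩

lemma ext_split (α : ℝ) (n : ℕ) :
    Ext n (D α n) = Ext (n + 1) (D α n ∪ {n}) ∪ Ext (n + 1) (D α n) := by
  have hn : n ∉ D α n := fun h => lt_irrefl n (D_subset_Iio α n h)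
  ext T
  constructor
  · rintro ⟨h1, h2⟩
    by_cases hT : n ∈ T
    · left
      refine ⟨h1, fun m hm => ?_⟩
      rcases Nat.lt_or_ge m n with h' | h'
      · rw [h2 m h']
        simp only [Set.mem_union, Set.mem_singleton_iff]
        constructor
        · exact fun h => Or.inl h
        · rintro (h | rfl)
          · exact h
          · exact absurd h' (lt_irrefl m)
      · have : m = n := by omega
        subst this
        simp [hT]
    · right
      refine ⟨h1, fun m hm => ?_⟩
      rcases Nat.lt_or_ge m n with h' | h'
      · exact h2 m h'
      · have : m = n := by omega
        subst this
        simp [hT, hn]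
  · rintro (⟨h1, h2⟩ | ⟨h1, h2⟩)
    · refine ⟨h1, fun m hm => ?_⟩
      rw [h2 m (lt_trans hm (Nat.lt_succ_self n))]
      simp only [Set.mem_union, Set.mem_singleton_iff]
      constructor
      · rintro (h | rfl)
        · exact h
        · exact absurd hm (lt_irrefl m)
      · exact fun h => Or.inl h
    · exact ⟨h1, fun m hm => h2 m (lt_trans hm (Nat.lt_succ_self n))⟩

lemma c_invariant (α : ℝ) : ∀ n, c α n (D α n) = s α := by
  intro n
  induction n with
  | zero =>
    have hE : Ext 0 (D α 0) = {T | IsSumFree T} := by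
      ext T; simp [Ext]
    rw [c, hE, s_eq]
    apply le_antisymm
    · exact iSup₂_le fun T hT => le_iSup (fun T : {T : Set ℕ // IsSumFree T} => G α T.1) ⟨T, hT⟩
    · exact iSup_le fun T => le_iSup₂ (f := fun (T : Set ℕ) (_ : T ∈ {T | IsSumFree T}) => G α T) T.1 T.2
  | succ n ih =>
    have hsplit : c α n (D α n)
        = c α (n + 1) (D α n ∪ {n}) ⊔ c α (n + 1) (D α n) := by
      rw [c, ext_split α n, iSup_union]; rfl
    rw [ih] at hsplit
    by_cases h : c α (n + 1) (D α n ∪ {n}) = s α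
    · have hD : D α (n + 1) = D α n ∪ {n} := by rw [D, if_pos h]
      rw [hD, h]
    · have hD : D α (n + 1) = D α n := by rw [D, if_neg h]
      rw [hD]
      rcases le_total (c α (n + 1) (D α n ∪ {n})) (c α (n + 1) (D α n)) with h' | h'
      · rw [sup_eq_right.mpr h'] at hsplit; exact hsplit.symm
      · rw [sup_eq_left.mpr h'] at hsplit; exact absurd hsplit.symm h

lemma ext_nonempty (α : ℝ) (n : ℕ) : ∃ T, T ∈ Ext n (D α n) := by
  by_contra h
  push_neg at h
  have h0 : c α n (D α n) = 0 := by
    rw [c]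
    have hE : Ext n (D α n) = ∅ := Set.eq_empty_iff_forall_notMem.mpr h
    rw [hE]
    simp
  have h1 := c_invariant α n
  rw [h0] at h1
  have h2 := one_le_s α
  rw [← h1] at h2
  simp at h2

lemma F_sumFree (α : ℝ) : IsSumFree (F α) := by
  constructor
  · intro f hf
    rcases Nat.eq_zero_or_pos f with h | h
    · subst h
      obtain ⟨T, hT⟩ := ext_nonempty α 1
      have h0 : (0 : ℕ) ∈ D α 1 := (F_agree α 1 0 (by norm_num)).mp hf
      have h0T : (0 : ℕ) ∈ T := (hT.2 0 (by norm_num)).mpr h0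
      exact absurd (hT.1.1 0 h0T) (lt_irrefl 0)
    · exact h
  · intro x hx y hy hxy
    set n := x + y + 1 with hn
    obtain ⟨T, hT⟩ := ext_nonempty α n
    have hxT : x ∈ T := (hT.2 x (by omega)).mpr ((F_agree α n x (by omega)).mp hx)
    have hyT : y ∈ T := (hT.2 y (by omega)).mpr ((F_agree α n y (by omega)).mp hy)
    have hxyT : x + y ∈ T := (hT.2 (x + y) (by omega)).mpr
      ((F_agree α n (x + y) (by omega)).mp hxy)
    exact hT.1.2 x hxT y hyT hxyT

section AlphaGt

variable {α : ℝ} (hα : 1 < α)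

include hα in
lemma tot_ne_top : (∑' k : ℕ, g α (k + 1)) ≠ ⊤ := by
  have hsum : Summable (fun n : ℕ => (n : ℝ≥0) ^ (-α)) := NNReal.summable_rpow.mpr (by linarith)
  have htop : (∑' n : ℕ, (((n : ℝ≥0) ^ (-α) : ℝ≥0) : ℝ≥0∞)) ≠ ⊤ :=
    ENNReal.tsum_coe_ne_top_iff_summable.mpr hsum
  have hle : (∑' k : ℕ, g α (k + 1)) ≤ ∑' n : ℕ, (((n : ℝ≥0) ^ (-α) : ℝ≥0) : ℝ≥0∞) := by
    have hcomp := ENNReal.tsum_comp_le_tsum_of_injective (f := fun k : ℕ => k + 1)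
      (fun a b h => by simpa using h) (fun n : ℕ => ((((n : ℝ≥0) ^ (-α) : ℝ≥0)) : ℝ≥0∞))
    refine le_trans (le_of_eq (tsum_congr fun k => ?_)) hcomp
    show g α (k + 1) = ((((k + 1 : ℕ) : ℝ≥0) ^ (-α) : ℝ≥0) : ℝ≥0∞)
    rw [g, ENNReal.coe_rpow_of_ne_zero (by positivity)]
    norm_cast
  exact fun h => htop (eq_top_iff.mpr (h ▸ hle))

lemma s_le_G_add (n : ℕ) :
    s α ≤ G α (F α) + ∑' k : ℕ, g α (k + (n + 1)) := by
  rw [← c_invariant α (n + 1)]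
  apply iSup₂_le
  intro T hT
  have hsplit : G α T = (∑' m : (↑(Finset.range (n + 1)) : Set ℕ), T.indicator (g α) ↑m)
      + ∑' m : ((↑(Finset.range (n + 1)) : Set ℕ)ᶜ : Set ℕ), T.indicator (g α) ↑m :=
    (Summable.tsum_add_tsum_compl (f := fun m : ℕ => T.indicator (g α) m)
      ENNReal.summable ENNReal.summable).symm
  rw [hsplit]
  apply add_le_add
  · rw [Finset.tsum_subtype' (Finset.range (n + 1)) (fun m => T.indicator (g α) m)]
    have hagree : ∀ m ∈ Finset.range (n + 1),
        T.indicator (g α) m = (F α).indicator (g α) m := by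
      intro m hm
      rw [Finset.mem_range] at hm
      have hiff : m ∈ T ↔ m ∈ F α := (hT.2 m hm).trans (F_agree α (n + 1) m hm).symm
      by_cases h : m ∈ T
      · rw [Set.indicator_of_mem h, Set.indicator_of_mem (hiff.mp h)]
      · rw [Set.indicator_of_notMem h, Set.indicator_of_notMem (fun hh => h (hiff.mpr hh))]
    rw [Finset.sum_congr rfl hagree]
    exact ENNReal.sum_le_tsum _
  · have hmem : ∀ m : ((↑(Finset.range (n + 1)) : Set ℕ)ᶜ : Set ℕ), n + 1 ≤ (m : ℕ) := by
      rintro ⟨m, hm⟩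
      simp only [Set.mem_compl_iff, Finset.coe_range, Set.mem_Iio, not_lt] at hm
      exact hm
    calc (∑' m : ((↑(Finset.range (n + 1)) : Set ℕ)ᶜ : Set ℕ), T.indicator (g α) ↑m)
        ≤ ∑' m : ((↑(Finset.range (n + 1)) : Set ℕ)ᶜ : Set ℕ), g α (((m : ℕ) - (n + 1)) + (n + 1)) := by
          apply ENNReal.tsum_le_tsum
          intro m
          rw [show ((m : ℕ) - (n + 1)) + (n + 1) = (m : ℕ) from by have := hmem m; omega]
          exact Set.indicator_le_self _ _ _
      _ ≤ ∑' k : ℕ, g α (k + (n + 1)) := by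
          apply ENNReal.tsum_comp_le_tsum_of_injective
            (f := fun m : ((↑(Finset.range (n + 1)) : Set ℕ)ᶜ : Set ℕ) => (m : ℕ) - (n + 1))
          intro a b hab
          have ha := hmem a
          have hb := hmem b
          have hab' : (a : ℕ) - (n + 1) = (b : ℕ) - (n + 1) := hab
          exact Subtype.ext (by omega)

include hα in
lemma s_le_G : s α ≤ G α (F α) := by
  apply ENNReal.le_of_forall_pos_le_add
  intro ε hε _
  have htail := ENNReal.tendsto_sum_nat_add (fun k => g α (k + 1)) (tot_ne_top hα)
  obtain ⟨N, hN⟩ := (ENNReal.tendsto_atTop_zero.mp htail) (↑ε) (ENNReal.coe_pos.mpr hε)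
  have hN' := hN N le_rfl
  calc s α ≤ G α (F α) + ∑' k : ℕ, g α (k + (N + 1)) := s_le_G_add N
    _ ≤ G α (F α) + ↑ε := by
        apply add_le_add le_rfl
        refine le_trans (le_of_eq (tsum_congr fun k => ?_)) hN'
        show g α (k + (N + 1)) = g α (k + N + 1)
        rw [show k + (N + 1) = k + N + 1 from by omega]

end AlphaGt

section AlphaLe

def oddEmb (k : ℕ) : ({n : ℕ | Odd n} : Set ℕ) := ⟨2 * k + 1, ⟨k, by ring⟩⟩

lemma odd_sumFree : IsSumFree {n : ℕ | Odd n} := by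
  constructor
  · rintro f ⟨k, hk⟩; omega
  · rintro x ⟨a, ha⟩ y ⟨b, hb⟩ ⟨c, hc⟩; omega

variable {α : ℝ} (hα : α ≤ 1)

include hα

lemma odd_top : G α {n : ℕ | Odd n} = ⊤ := by
  have hinj : Function.Injective oddEmb := by
    intro a b hab
    have h := congrArg Subtype.val hab
    simp only [oddEmb] at h
    omega
  have hle : (∑' k : ℕ, g α ((oddEmb k : ℕ))) ≤ ∑' f : ({n : ℕ | Odd n} : Set ℕ), g α f :=
    ENNReal.tsum_comp_le_tsum_of_injective hinj (fun f => g α f)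
  have hlow : ∀ k : ℕ, (2 : ℝ≥0∞)⁻¹ * ((k + 1 : ℕ) : ℝ≥0∞)⁻¹ ≤ g α ((oddEmb k : ℕ)) := by
    intro k
    show (2 : ℝ≥0∞)⁻¹ * ((k + 1 : ℕ) : ℝ≥0∞)⁻¹ ≤ ((2 * k + 1 : ℕ) : ℝ≥0∞) ^ (-α)
    have h1 : ((2 * k + 1 : ℕ) : ℝ≥0∞) ^ (-(1 : ℝ)) ≤ ((2 * k + 1 : ℕ) : ℝ≥0∞) ^ (-α) := by
      apply ENNReal.rpow_le_rpow_of_exponent_le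
      · exact_mod_cast Nat.one_le_iff_ne_zero.mpr (by omega)
      · linarith
    refine le_trans ?_ h1
    rw [ENNReal.rpow_neg_one]
    have h2 : (2 : ℝ≥0∞)⁻¹ * ((k + 1 : ℕ) : ℝ≥0∞)⁻¹ = ((2 * (k + 1) : ℕ) : ℝ≥0∞)⁻¹ := by
      rw [← ENNReal.mul_inv (by norm_num) (by norm_num)]
      norm_num
    rw [h2]
    apply ENNReal.inv_le_inv.mpr
    exact_mod_cast (by omega : 2 * k + 1 ≤ 2 * (k + 1))
  have hharm : (∑' k : ℕ, (2 : ℝ≥0∞)⁻¹ * ((k + 1 : ℕ) : ℝ≥0∞)⁻¹) = ⊤ := by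
    rw [ENNReal.tsum_mul_left]
    have hh : (∑' k : ℕ, ((k + 1 : ℕ) : ℝ≥0∞)⁻¹) = ⊤ := by
      by_contra h
      have heq : ∀ k : ℕ, ((k + 1 : ℕ) : ℝ≥0∞)⁻¹
          = ENNReal.ofNNReal ((((k + 1 : ℕ) : ℝ≥0))⁻¹) := by
        intro k
        rw [ENNReal.coe_inv (by positivity), ENNReal.coe_natCast]
        all_goals norm_cast
      simp_rw [heq] at h
      have hsum : Summable (fun k : ℕ => (((k + 1 : ℕ) : ℝ≥0))⁻¹) :=
        ENNReal.tsum_coe_ne_top_iff_summable.mp h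
      have hsumR : Summable (fun k : ℕ => (((k + 1 : ℕ) : ℝ))⁻¹) := by
        have hc := NNReal.summable_coe.mpr hsum
        simpa [NNReal.coe_inv] using hc
      have hbad : Summable (fun n : ℕ => ((n : ℝ))⁻¹) := by
        apply (summable_nat_add_iff 1).mp
        exact_mod_cast hsumR
      exact Real.not_summable_natCast_inv hbad
    rw [hh, ENNReal.mul_top (by norm_num)]
  have htop : (∑' k : ℕ, g α ((oddEmb k : ℕ))) = ⊤ := by
    apply eq_top_iff.mpr
    rw [← hharm]
    exact ENNReal.tsum_le_tsum hlow
  rw [← val_eq]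
  exact eq_top_iff.mpr (htop ▸ hle)

end AlphaLe

end SumFreeAux

theorem exists_sumfree_maximizing_rpow_sum (α : ℝ) :
    ∃ F : Set ℕ, IsSumFree F ∧
      (∑' f : F, ((f : ℕ) : ℝ≥0∞) ^ (-α)) =
        (⨆ T : {T : Set ℕ // IsSumFree T}, ∑' f : T.1, ((f : ℕ) : ℝ≥0∞) ^ (-α)) := by
  rcases le_or_gt α 1 with hα | hα
  · refine ⟨{n : ℕ | Odd n}, SumFreeAux.odd_sumFree, ?_⟩
    rw [SumFreeAux.val_eq, SumFreeAux.odd_top hα]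
    change _ = SumFreeAux.s α
    refine (eq_top_iff.mpr ?_).symm
    rw [← SumFreeAux.odd_top hα]
    exact SumFreeAux.le_s α _ SumFreeAux.odd_sumFree
  · refine ⟨SumFreeAux.F α, SumFreeAux.F_sumFree α, ?_⟩
    rw [SumFreeAux.val_eq]
    change SumFreeAux.G α (SumFreeAux.F α) = SumFreeAux.s α
    exact le_antisymm (SumFreeAux.le_s α _ (SumFreeAux.F_sumFree α)) (SumFreeAux.s_le_G hα)
end

section
/- Let g ≥ 2, h ≥ 2 be integers and α > 1/h a real number. Then the supremum sup{∑_{b∈B} b^{-α} : B ⊆ ℕ* a B_h[g]-set} is finite and is attained: there exists a B_h[g]-set B_α with ∑_{b∈B_α} b^{-α} equal to this supremum. -/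
open scoped ENNReal

/-- A set of positive integers is a `B_h[g]`-set: for every `k`, there are at most `g`
nondecreasing `h`-tuples of elements of `B` summing to `k`. -/
def IsBhg (h g : ℕ) (B : Set ℕ) : Prop :=
  (∀ b ∈ B, 0 < b) ∧
    ∀ k : ℕ,
      Nat.card {x : Fin h → ℕ | (∀ i, x i ∈ B) ∧ Monotone x ∧ ∑ i, x i = k} ≤ g

namespace BhgAux

def tupleSet (h : ℕ) (B : Set ℕ) (k : ℕ) : Set (Fin h → ℕ) :=
  {x | (∀ i, x i ∈ B) ∧ Monotone x ∧ ∑ i, x i = k}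

lemma mem_le {h k : ℕ} {B : Set ℕ} {x : Fin h → ℕ} (hx : x ∈ tupleSet h B k) (i : Fin h) :
    x i ≤ k := by
  rcases hx with ⟨-, -, hs⟩
  calc x i ≤ ∑ j, x j := Finset.single_le_sum (fun j _ => Nat.zero_le _) (Finset.mem_univ i)
  _ = k := hs

lemma tupleSet_finite (h : ℕ) (B : Set ℕ) (k : ℕ) : (tupleSet h B k).Finite := by
  apply Set.Finite.subset (Set.Finite.pi (fun _ : Fin h => Set.finite_Iic k))
  intro x hx
  exact Set.mem_univ_pi.2 fun i => mem_le hx i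

lemma tupleSet_mono {h k : ℕ} {B C : Set ℕ} (hBC : B ⊆ C) :
    tupleSet h B k ⊆ tupleSet h C k := fun x ⟨h1, h2, h3⟩ => ⟨fun i => hBC (h1 i), h2, h3⟩

lemma isBhg_subset {h g : ℕ} {B C : Set ℕ} (hC : IsBhg h g C) (hBC : B ⊆ C) : IsBhg h g B := by
  refine ⟨fun b hb => hC.1 b (hBC hb), fun k => ?_⟩
  exact le_trans (Nat.card_mono (tupleSet_finite h C k) (tupleSet_mono hBC)) (hC.2 k)

lemma tupleSet_congr {h k : ℕ} {B C : Set ℕ} (hBC : B ∩ Set.Iic k = C ∩ Set.Iic k) :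
    tupleSet h B k = tupleSet h C k := by
  have key : ∀ {B C : Set ℕ}, B ∩ Set.Iic k = C ∩ Set.Iic k →
      tupleSet h B k ⊆ tupleSet h C k := by
    intro B C hBC x hx
    refine ⟨fun i => ?_, hx.2.1, hx.2.2⟩
    have : x i ∈ B ∩ Set.Iic k := ⟨hx.1 i, mem_le hx i⟩
    rw [hBC] at this
    exact this.1
  exact le_antisymm (key hBC) (key hBC.symm)

lemma isBhg_empty (h g : ℕ) (hh : 1 ≤ h) : IsBhg h g (∅ : Set ℕ) := by
  refine ⟨fun b hb => absurd hb (Set.notMem_empty b), fun k => ?_⟩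
  have : {x : Fin h → ℕ | (∀ i, x i ∈ (∅ : Set ℕ)) ∧ Monotone x ∧ ∑ i, x i = k} = ∅ := by
    ext x
    simp only [Set.mem_setOf_eq, Set.mem_empty_iff_false, iff_false]
    rintro ⟨h1, -⟩
    exact h1 ⟨0, hh⟩
  rw [this]
  simp


lemma counting {h g : ℕ} {B : Set ℕ} (hB : IsBhg h g B) (N : ℕ) :
    (Nat.card ↥(B ∩ Set.Icc 1 N)) ^ h ≤ h.factorial * (g * (h * N + 1)) := by
  classical
  have hfin : (B ∩ Set.Icc 1 N).Finite := Set.Finite.inter_of_right (Set.finite_Icc 1 N) B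
  set F : Finset ℕ := hfin.toFinset with hF
  have hcard : Nat.card ↥(B ∩ Set.Icc 1 N) = F.card := by
    rw [Nat.card_coe_set_eq, Set.ncard_eq_toFinset_card _ hfin]
  set P : Finset (Fin h → ℕ) := Fintype.piFinset fun _ : Fin h => F with hP
  set T : Finset (Fin h → ℕ) := P.filter (fun x => Monotone x) with hT
  set σ : (Fin h → ℕ) → (Fin h → ℕ) := fun y => y ∘ (Tuple.sort y) with hσ
  have himage : P.image σ ⊆ T := by
    intro x hx
    rcases Finset.mem_image.1 hx with ⟨y, hy, rfl⟩
    refine Finset.mem_filter.2 ⟨?_, Tuple.monotone_sort y⟩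
    rw [Fintype.mem_piFinset] at hy ⊢
    intro i; exact hy _
  have hfiber : ∀ x ∈ P.image σ, (P.filter (fun y => σ y = x)).card ≤ h.factorial := by
    intro x _
    have hsub : P.filter (fun y => σ y = x) ⊆
        (Finset.univ : Finset (Equiv.Perm (Fin h))).image (fun e : Equiv.Perm (Fin h) => x ∘ ⇑e) := by
      intro y hy
      rcases Finset.mem_filter.1 hy with ⟨-, hyx⟩
      refine Finset.mem_image.2 ⟨(Tuple.sort y)⁻¹, Finset.mem_univ _, ?_⟩
      funext i
      have h2 := congrFun hyx ((Tuple.sort y)⁻¹ i)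
      simp only [hσ, Function.comp_apply] at h2 ⊢
      rw [show (Tuple.sort y) ((Tuple.sort y)⁻¹ i) = i from (Tuple.sort y).apply_symm_apply i] at h2
      exact h2.symm
    calc (P.filter (fun y => σ y = x)).card
        ≤ ((Finset.univ : Finset (Equiv.Perm (Fin h))).image (fun e : Equiv.Perm (Fin h) => x ∘ ⇑e)).card :=
          Finset.card_le_card hsub
      _ ≤ (Finset.univ : Finset (Equiv.Perm (Fin h))).card := Finset.card_image_le
      _ = h.factorial := by simp [Finset.card_univ, Fintype.card_perm]
  have h1 : P.card ≤ h.factorial * (P.image σ).card :=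
    Finset.card_le_mul_card_image P h.factorial hfiber
  have hPcard : P.card = F.card ^ h := by
    simp [hP, Fintype.card_piFinset]
  have hT2 : T.card ≤ g * (h * N + 1) := by
    have hsub : T ⊆ (Finset.range (h * N + 1)).biUnion
        (fun k => T.filter (fun x => ∑ i, x i = k)) := by
      intro x hx
      refine Finset.mem_biUnion.2 ⟨∑ i, x i, ?_, Finset.mem_filter.2 ⟨hx, rfl⟩⟩
      rw [Finset.mem_range, Nat.lt_succ_iff]
      have hxN : ∀ i, x i ≤ N := by
        intro i
        have hxP := (Finset.mem_filter.1 hx).1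
        rw [hP, Fintype.mem_piFinset] at hxP
        have h3 := hxP i
        rw [hF, Set.Finite.mem_toFinset] at h3
        exact h3.2.2
      calc ∑ i, x i ≤ ∑ _i : Fin h, N := Finset.sum_le_sum fun i _ => hxN i
        _ = h * N := by simp [Finset.sum_const, mul_comm]
    have hfilt : ∀ k, (T.filter (fun x => ∑ i, x i = k)).card ≤ g := by
      intro k
      have hsub2 : ((T.filter (fun x => ∑ i, x i = k)) : Set (Fin h → ℕ)) ⊆ tupleSet h B k := by
        intro x hx
        simp only [hT, Finset.coe_filter, Set.mem_setOf_eq, Finset.mem_filter] at hx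
        obtain ⟨⟨hxP, hmono⟩, hsum⟩ := hx
        rw [hP, Fintype.mem_piFinset] at hxP
        refine ⟨fun i => ?_, hmono, hsum⟩
        have h3 := hxP i
        rw [hF, Set.Finite.mem_toFinset] at h3
        exact h3.1
      have h4 := Set.ncard_le_ncard hsub2 (tupleSet_finite h B k)
      rw [Set.ncard_coe_finset] at h4
      refine le_trans h4 (le_trans (le_of_eq (Nat.card_coe_set_eq _).symm) (hB.2 k))
    calc T.card ≤ ∑ k ∈ Finset.range (h*N+1), (T.filter (fun x => ∑ i, x i = k)).card :=
        le_trans (Finset.card_le_card hsub) (Finset.card_biUnion_le)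
      _ ≤ ∑ _k ∈ Finset.range (h*N+1), g := Finset.sum_le_sum fun k _ => hfilt k
      _ = g * (h * N + 1) := by simp [Finset.sum_const, mul_comm]
  calc (Nat.card ↥(B ∩ Set.Icc 1 N)) ^ h = P.card := by rw [hcard, hPcard]
    _ ≤ h.factorial * (P.image σ).card := h1
    _ ≤ h.factorial * T.card := Nat.mul_le_mul_left _ (Finset.card_le_card himage)
    _ ≤ h.factorial * (g * (h * N + 1)) := Nat.mul_le_mul_left _ hT2

noncomputable def rr (h : ℕ) (α : ℝ) : ℝ≥0∞ := (2:ℝ≥0∞) ^ (1/(h:ℝ) - α)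
def AA (h g : ℕ) : ℕ := h.factorial * (g * (2*h+1))
noncomputable def DD (h g : ℕ) : ℝ≥0∞ := ((AA h g : ℕ) : ℝ≥0∞) ^ (1/(h:ℝ))
noncomputable def CC (h g : ℕ) (α : ℝ) : ℝ≥0∞ := DD h g * (1 - rr h α)⁻¹

lemma rr_lt_one {h : ℕ} (hh : 1 ≤ h) {α : ℝ} (hα : 1/(h:ℝ) < α) : rr h α < 1 :=
  ENNReal.rpow_lt_one_of_one_lt_of_neg (by norm_num) (by linarith)

lemma DD_ne_top (h g : ℕ) : DD h g ≠ ⊤ :=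
  ENNReal.rpow_ne_top_of_nonneg (by positivity) (ENNReal.natCast_ne_top _)

lemma CC_ne_top {h g : ℕ} (hh : 1 ≤ h) {α : ℝ} (hα : 1/(h:ℝ) < α) : CC h g α ≠ ⊤ := by
  apply ENNReal.mul_ne_top (DD_ne_top h g)
  rw [Ne, ENNReal.inv_eq_top, tsub_eq_zero_iff_le]
  exact not_le.2 (rr_lt_one hh hα)

lemma tail_bound {h g : ℕ} (hh : 1 ≤ h) {α : ℝ} (hα : 1/(h:ℝ) < α)
    {B : Set ℕ} (hB : IsBhg h g B) (J : ℕ) (hmin : ∀ b ∈ B, 2^J ≤ b) :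
    (∑' b : B, ((b : ℕ) : ℝ≥0∞) ^ (-α)) ≤ CC h g α * (rr h α)^J := by
  have hh0 : ((h:ℝ)) ≠ 0 := Nat.cast_ne_zero.2 (by omega)
  have hα0 : 0 < α := lt_trans (by positivity) hα
  set f : ℕ → ℝ≥0∞ := fun b => ((b : ℕ) : ℝ≥0∞) ^ (-α) with hf
  set blockSet : ℕ → Set ℕ := fun j => B ∩ Set.Ico (2^j) (2^(j+1)) with hblock
  -- block bounds
  have inner_le : ∀ j : ℕ, (∑' b : ℕ, Set.indicator (blockSet j) f b) ≤ DD h g * (rr h α)^j := by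
    intro j
    have hsub : blockSet j ⊆ B ∩ Set.Icc 1 (2^(j+1)) := by
      rintro b ⟨hbB, hb1, hb2⟩
      have h1 : 1 ≤ 2^j := Nat.one_le_two_pow
      exact ⟨hbB, by omega, by omega⟩
    have hfinb : (blockSet j).Finite :=
      (Set.finite_Icc 1 (2^(j+1))).inter_of_right B |>.subset hsub
    set m : ℕ := Nat.card ↥(B ∩ Set.Icc 1 (2^(j+1))) with hm
    set c : ℝ≥0∞ := ((2:ℝ≥0∞)^j) ^ (-α) with hc
    have step1 : (∑' b : ℕ, Set.indicator (blockSet j) f b) ≤ (m : ℝ≥0∞) * c := by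
      rw [tsum_eq_sum (s := hfinb.toFinset)
        (fun b hb => Set.indicator_of_notMem (fun hmem => hb (hfinb.mem_toFinset.2 hmem)) f)]
      have hle : ∀ b ∈ hfinb.toFinset, Set.indicator (blockSet j) f b ≤ c := by
        intro b hb
        rw [Set.Finite.mem_toFinset] at hb
        rw [Set.indicator_of_mem hb]
        have h2b : ((2:ℝ≥0∞)^j) ≤ (b : ℝ≥0∞) := by
          have : ((2^j : ℕ) : ℝ≥0∞) ≤ (b : ℝ≥0∞) := Nat.cast_le.2 hb.2.1
          simpa using this
        show ((b : ℕ) : ℝ≥0∞) ^ (-α) ≤ ((2:ℝ≥0∞)^j) ^ (-α)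
        rw [ENNReal.rpow_neg, ENNReal.rpow_neg]
        exact ENNReal.inv_le_inv.2 (ENNReal.rpow_le_rpow h2b hα0.le)
      calc (∑ b ∈ hfinb.toFinset, Set.indicator (blockSet j) f b)
          ≤ hfinb.toFinset.card • c := Finset.sum_le_card_nsmul _ _ c hle
        _ = (hfinb.toFinset.card : ℝ≥0∞) * c := by rw [nsmul_eq_mul]
        _ ≤ (m : ℝ≥0∞) * c := by
            gcongr
            rw [hm, Nat.card_coe_set_eq, ← Set.ncard_eq_toFinset_card _ hfinb]
            exact Nat.cast_le.2 (Set.ncard_le_ncard hsub ((Set.finite_Icc 1 (2^(j+1))).inter_of_right B))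
      -- end
    have step2 : (m : ℝ≥0∞) ≤ DD h g * ((2:ℝ≥0∞)^j) ^ (1/(h:ℝ)) := by
      have hnat : m ^ h ≤ AA h g * 2^j := by
        have e1 : h * 2^(j+1) + 1 ≤ (2*h+1) * 2^j := by
          have h2j : 1 ≤ 2^j := Nat.one_le_two_pow
          calc h * 2^(j+1) + 1 = 2*h*2^j + 1 := by ring
            _ ≤ 2*h*2^j + 2^j := by omega
            _ = (2*h+1)*2^j := by ring
        calc m ^ h ≤ h.factorial * (g * (h * 2^(j+1) + 1)) := counting hB (2^(j+1))
          _ ≤ h.factorial * (g * ((2*h+1) * 2^j)) := by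
              exact Nat.mul_le_mul_left _ (Nat.mul_le_mul_left _ e1)
          _ = AA h g * 2^j := by rw [AA]; ring
      have cast1 : ((m : ℝ≥0∞)) = (((m^h : ℕ) : ℝ≥0∞)) ^ (1/(h:ℝ)) := by
        push_cast
        rw [← ENNReal.rpow_natCast ((m:ℝ≥0∞)) h, ← ENNReal.rpow_mul, mul_one_div,
          div_self hh0, ENNReal.rpow_one]
      rw [cast1]
      calc (((m^h : ℕ) : ℝ≥0∞)) ^ (1/(h:ℝ))
          ≤ (((AA h g * 2^j : ℕ) : ℝ≥0∞)) ^ (1/(h:ℝ)) := by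
            apply ENNReal.rpow_le_rpow (Nat.cast_le.2 hnat) (by positivity)
        _ = DD h g * ((2:ℝ≥0∞)^j) ^ (1/(h:ℝ)) := by
            push_cast
            rw [ENNReal.mul_rpow_of_nonneg _ _ (by positivity : (0:ℝ) ≤ 1/(h:ℝ))]
            rfl
    calc (∑' b : ℕ, Set.indicator (blockSet j) f b) ≤ (m : ℝ≥0∞) * c := step1
      _ ≤ (DD h g * ((2:ℝ≥0∞)^j) ^ (1/(h:ℝ))) * c := by gcongr
      _ = DD h g * (rr h α)^j := by
          rw [hc, mul_assoc]
          congr 1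
          rw [← ENNReal.rpow_natCast (2:ℝ≥0∞) j, ← ENNReal.rpow_mul, ← ENNReal.rpow_mul,
            ← ENNReal.rpow_add _ _ (by norm_num) (by norm_num), rr,
            ← ENNReal.rpow_natCast ((2:ℝ≥0∞) ^ (1/(h:ℝ) - α)) j, ← ENNReal.rpow_mul]
          congr 1
          ring
  have inner_zero : ∀ j : ℕ, j < J → (∑' b : ℕ, Set.indicator (blockSet j) f b) = 0 := by
    intro j hj
    have : blockSet j = ∅ := by
      ext b
      simp only [hblock, Set.mem_inter_iff, Set.mem_Ico, Set.mem_empty_iff_false, iff_false]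
      rintro ⟨hbB, -, hb2⟩
      have := hmin b hbB
      have : (2:ℕ)^(j+1) ≤ 2^J := Nat.pow_le_pow_right (by norm_num) hj
      omega
    simp [this]
  -- decompose
  have decomp : (∑' b : B, ((b : ℕ) : ℝ≥0∞) ^ (-α))
      = ∑' j : ℕ, ∑' b : ℕ, Set.indicator (blockSet j) f b := by
    rw [tsum_subtype B f, ← ENNReal.tsum_comm]
    congr 1
    funext b
    by_cases hb : b ∈ B
    · have hb0 : 0 < b := hB.1 b hb
      have hmem : b ∈ blockSet (Nat.log 2 b) :=
        ⟨hb, Nat.pow_log_le_self 2 hb0.ne', Nat.lt_pow_succ_log_self one_lt_two b⟩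
      rw [tsum_eq_single (Nat.log 2 b) ?side]
      · rw [Set.indicator_of_mem hb, Set.indicator_of_mem hmem]
      case side =>
        intro j hj
        apply Set.indicator_of_notMem
        rintro ⟨-, h1, h2⟩
        exact hj (Nat.log_eq_of_pow_le_of_lt_pow h1 h2).symm
    · rw [Set.indicator_of_notMem hb]
      symm
      simp only [ENNReal.tsum_eq_zero]
      intro j
      exact Set.indicator_of_notMem (fun hmem => hb hmem.1) f
  rw [decomp]
  set e : ℕ → ℝ≥0∞ := fun j => if J ≤ j then DD h g * (rr h α)^j else 0 with he
  calc (∑' j : ℕ, ∑' b : ℕ, Set.indicator (blockSet j) f b) ≤ ∑' j, e j := by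
        apply ENNReal.tsum_le_tsum
        intro j
        by_cases hj : J ≤ j
        · rw [he]; simp only [hj, if_true]; exact inner_le j
        · rw [inner_zero j (not_le.1 hj)]; exact zero_le
    _ = ∑' i : ℕ, e (i + J) := by
        symm
        apply Function.Injective.tsum_eq (add_left_injective J)
        intro j hj
        rw [Function.mem_support, he] at hj
        simp only at hj
        by_cases hJ : J ≤ j
        · exact ⟨j - J, Nat.sub_add_cancel hJ⟩
        · exact absurd (if_neg hJ) hj
    _ = CC h g α * (rr h α)^J := by
        have : ∀ i : ℕ, e (i + J) = (DD h g * (rr h α)^J) * (rr h α)^i := by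
          intro i
          rw [he]
          simp only [le_add_iff_nonneg_left, zero_le, if_true]
          rw [pow_add]
          ring
        rw [tsum_congr this, ENNReal.tsum_mul_left, ENNReal.tsum_geometric, CC]
        ring

lemma total_bound {h g : ℕ} (hh : 1 ≤ h) {α : ℝ} (hα : 1/(h:ℝ) < α)
    {B : Set ℕ} (hB : IsBhg h g B) :
    (∑' b : B, ((b : ℕ) : ℝ≥0∞) ^ (-α)) ≤ CC h g α := by
  have := tail_bound hh hα hB 0 (fun b hb => by rw [pow_zero]; exact hB.1 b hb)
  simpa using this

lemma tsum_subset {A B : Set ℕ} (f : ℕ → ℝ≥0∞) (hAB : A ⊆ B) :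
    (∑' b : A, f b) ≤ ∑' b : B, f b := by
  rw [tsum_subtype A f, tsum_subtype B f]
  exact ENNReal.tsum_le_tsum fun b =>
    Set.indicator_le_indicator_of_subset hAB (fun _ => zero_le) b

lemma tsum_split (C : Set ℕ) (N : ℕ) (f : ℕ → ℝ≥0∞) :
    (∑' b : C, f b) ≤ (∑' b : ↥(C ∩ Set.Iic N), f b) + ∑' b : ↥(C ∩ {x | N < x}), f b := by
  rw [tsum_subtype C f, tsum_subtype (C ∩ Set.Iic N) f, tsum_subtype (C ∩ {x | N < x}) f,
    ← ENNReal.tsum_add]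
  apply ENNReal.tsum_le_tsum
  intro b
  by_cases hC : b ∈ C
  · by_cases hN : b ≤ N
    · have hmem : b ∈ C ∩ Set.Iic N := ⟨hC, hN⟩
      rw [Set.indicator_of_mem hmem f, Set.indicator_of_mem hC f]
      exact le_self_add
    · have hmem : b ∈ C ∩ {x | N < x} := ⟨hC, not_le.1 hN⟩
      rw [Set.indicator_of_mem hmem f, Set.indicator_of_mem hC f]
      exact le_add_self
  · rw [Set.indicator_of_notMem hC]
    exact zero_le

end BhgAux

theorem exists_Bhg_maximizing_rpow_sum (g h : ℕ) (hg : 2 ≤ g) (hh : 2 ≤ h)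
    (α : ℝ) (hα : 1 / (h : ℝ) < α) :
    ∃ B : Set ℕ, IsBhg h g B ∧
      (∑' b : B, ((b : ℕ) : ℝ≥0∞) ^ (-α)) =
        (⨆ T : {T : Set ℕ // IsBhg h g T}, ∑' b : T.1, ((b : ℕ) : ℝ≥0∞) ^ (-α)) ∧
      (⨆ T : {T : Set ℕ // IsBhg h g T}, ∑' b : T.1, ((b : ℕ) : ℝ≥0∞) ^ (-α)) ≠ ⊤ := by
  classical
  have hh1 : 1 ≤ h := by omega
  set S := ⨆ T : {T : Set ℕ // IsBhg h g T}, ∑' b : T.1, ((b : ℕ) : ℝ≥0∞) ^ (-α) with hS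
  have hStop : S ≠ ⊤ := by
    have hle : S ≤ BhgAux.CC h g α := by
      apply iSup_le
      intro T
      exact BhgAux.total_bound hh1 hα T.2
    exact fun htop => (BhgAux.CC_ne_top hh1 hα) (top_le_iff.1 (htop ▸ hle))
  by_cases hS0 : S = 0
  · refine ⟨∅, BhgAux.isBhg_empty h g hh1, ?_, hStop⟩
    rw [tsum_empty, hS0]
  · have hch : ∀ n : ℕ, ∃ T : {T : Set ℕ // IsBhg h g T},
        S - ((n:ℝ≥0∞)+1)⁻¹ < ∑' b : T.1, ((b : ℕ) : ℝ≥0∞) ^ (-α) := by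
      intro n
      have h2 : S - ((n:ℝ≥0∞)+1)⁻¹ < S := ENNReal.sub_lt_self hStop hS0 (by simp)
      rw [hS] at h2
      obtain ⟨T, hT⟩ := lt_iSup_iff.1 h2
      exact ⟨T, by rw [← hS] at hT; exact hT⟩
    choose T hT using hch
    set U : Ultrafilter ℕ := Ultrafilter.of Filter.atTop with hU
    have hUat : ∀ s ∈ (Filter.atTop : Filter ℕ), s ∈ U :=
      fun s hs => Ultrafilter.of_le Filter.atTop hs
    set B : Set ℕ := {b : ℕ | {n | b ∈ (T n).1} ∈ U} with hB
    have agree : ∀ k : ℕ, {n | (T n).1 ∩ Set.Iic k = B ∩ Set.Iic k} ∈ U := by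
      intro k
      have hsub : (⋂ b ∈ Set.Iic k, {n | b ∈ (T n).1 ↔ b ∈ B})
          ⊆ {n | (T n).1 ∩ Set.Iic k = B ∩ Set.Iic k} := by
        intro n hn
        simp only [Set.mem_iInter] at hn
        show (T n).1 ∩ Set.Iic k = B ∩ Set.Iic k
        ext b
        constructor
        · rintro ⟨hb1, hb2⟩; exact ⟨(hn b hb2).1 hb1, hb2⟩
        · rintro ⟨hb1, hb2⟩; exact ⟨(hn b hb2).2 hb1, hb2⟩
      refine Filter.mem_of_superset ?_ hsub
      refine (Filter.biInter_mem (Set.finite_Iic k)).2 ?_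
      intro b _
      by_cases hb : b ∈ B
      · have he : {n | b ∈ (T n).1 ↔ b ∈ B} = {n | b ∈ (T n).1} := by
          ext n; simp [hb]
        rw [he]; exact hb
      · have he : {n | b ∈ (T n).1 ↔ b ∈ B} = {n | b ∈ (T n).1}ᶜ := by
          ext n; simp [hb]
        rw [he]
        exact (Ultrafilter.compl_mem_iff_notMem).2 hb
    have hBhg : IsBhg h g B := by
      constructor
      · intro b hb
        obtain ⟨n, hn⟩ := Ultrafilter.nonempty_of_mem (hb : {n | b ∈ (T n).1} ∈ U)
        exact (T n).2.1 b hn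
      · intro k
        obtain ⟨n, hn⟩ := Ultrafilter.nonempty_of_mem (agree k)
        show Nat.card (BhgAux.tupleSet h B k) ≤ g
        have hn' : (T n).1 ∩ Set.Iic k = B ∩ Set.Iic k := hn
        rw [BhgAux.tupleSet_congr hn'.symm]
        exact (T n).2.2 k
    have hle : (∑' b : B, ((b : ℕ) : ℝ≥0∞) ^ (-α)) ≤ S := by
      rw [hS]
      exact le_iSup (fun T : {T : Set ℕ // IsBhg h g T} =>
        ∑' b : T.1, ((b : ℕ) : ℝ≥0∞) ^ (-α)) ⟨B, hBhg⟩
    have hge : S ≤ ∑' b : B, ((b : ℕ) : ℝ≥0∞) ^ (-α) := by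
      apply ENNReal.le_of_forall_pos_le_add
      intro ε hε _
      have hε2 : (0:ℝ≥0∞) < (ε:ℝ≥0∞)/2 := by
        simp [ENNReal.div_pos_iff, hε.ne']
      -- choose J
      have htend : Filter.Tendsto (fun J : ℕ => BhgAux.CC h g α * (BhgAux.rr h α)^J)
          Filter.atTop (nhds 0) := by
        have := ENNReal.Tendsto.const_mul
          (ENNReal.tendsto_pow_atTop_nhds_zero_of_lt_one (BhgAux.rr_lt_one hh1 hα))
          (Or.inr (BhgAux.CC_ne_top (g := g) hh1 hα))
        simpa using this
      obtain ⟨J, hJ⟩ := (htend.eventually_lt_const hε2).exists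
      set N : ℕ := 2^J with hN
      -- choose M for the 1/(n+1) bound
      obtain ⟨M, hM⟩ := ENNReal.exists_inv_nat_lt hε2.ne'
      have good2 : {n : ℕ | ((n:ℝ≥0∞)+1)⁻¹ ≤ (ε:ℝ≥0∞)/2} ∈ U := by
        apply hUat
        refine Filter.mem_of_superset (Filter.mem_atTop M) ?_
        intro n hn
        have : (M:ℝ≥0∞) ≤ (n:ℝ≥0∞)+1 := by
          have : (M:ℝ≥0∞) ≤ (n:ℝ≥0∞) := Nat.cast_le.2 hn
          exact le_trans this le_self_add
        exact le_trans (ENNReal.inv_le_inv.2 this) hM.le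
      obtain ⟨n, hn1, hn2⟩ := Ultrafilter.nonempty_of_mem (U.inter_mem (agree N) good2)
      -- split
      have hTn : (∑' b : (T n).1, ((b : ℕ) : ℝ≥0∞) ^ (-α))
          ≤ (∑' b : ↥(B ∩ Set.Iic N), ((b : ℕ) : ℝ≥0∞) ^ (-α)) + (ε:ℝ≥0∞)/2 := by
        have hsplit := BhgAux.tsum_split (T n).1 N (fun b => ((b : ℕ) : ℝ≥0∞) ^ (-α))
        have hfront : (T n).1 ∩ Set.Iic N = B ∩ Set.Iic N := hn1
        rw [hfront] at hsplit
        have htail : (∑' b : ↥((T n).1 ∩ {x | N < x}), ((b : ℕ) : ℝ≥0∞) ^ (-α))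
            ≤ (ε:ℝ≥0∞)/2 := by
          have hsubBhg : IsBhg h g ((T n).1 ∩ {x | N < x}) :=
            BhgAux.isBhg_subset (T n).2 Set.inter_subset_left
          have hmin : ∀ b ∈ (T n).1 ∩ {x | N < x}, 2^J ≤ b := by
            rintro b ⟨-, hb⟩
            have hb' : N < b := hb
            rw [← hN]
            exact hb'.le
          exact le_trans (BhgAux.tail_bound hh1 hα hsubBhg J hmin) hJ.le
        exact le_trans hsplit (add_le_add le_rfl htail)
      calc S ≤ (S - ((n:ℝ≥0∞)+1)⁻¹) + ((n:ℝ≥0∞)+1)⁻¹ := le_tsub_add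
        _ ≤ (∑' b : (T n).1, ((b : ℕ) : ℝ≥0∞) ^ (-α)) + ((n:ℝ≥0∞)+1)⁻¹ :=
            add_le_add (hT n).le le_rfl
        _ ≤ (∑' b : (T n).1, ((b : ℕ) : ℝ≥0∞) ^ (-α)) + (ε:ℝ≥0∞)/2 :=
            add_le_add le_rfl hn2
        _ ≤ ((∑' b : ↥(B ∩ Set.Iic N), ((b : ℕ) : ℝ≥0∞) ^ (-α)) + (ε:ℝ≥0∞)/2) + (ε:ℝ≥0∞)/2 :=
            add_le_add hTn le_rfl
        _ ≤ ((∑' b : B, ((b : ℕ) : ℝ≥0∞) ^ (-α)) + (ε:ℝ≥0∞)/2) + (ε:ℝ≥0∞)/2 := by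
            gcongr
            exact BhgAux.tsum_subset (fun b : ℕ => ((b : ℕ) : ℝ≥0∞) ^ (-α))
              Set.inter_subset_left
        _ = (∑' b : B, ((b : ℕ) : ℝ≥0∞) ^ (-α)) + (ε:ℝ≥0∞) := by
            rw [add_assoc, ENNReal.add_halves]
    exact ⟨B, hBhg, le_antisymm hle hge, hStop⟩
end
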